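/- arXiv:2604.09883 — 5 statements merged into one kernel-verified Lean document; each statement's English description precedes it below -/
import Mathlib

section
/- Let J ∈ 𝒥_{k,N}. For every λ ∈ ℝ, the linear map from the eigenspace ker(J − λI) to ℂ^k sending a vector v to its first k coordinates E_1^* v is injective. Consequently, if v̂_1, …, v̂_p are linearly independent eigenvectors of J for a common eigenvalue λ, then the vectors E_1^* v̂_1, …, E_1^* v̂_p ∈ ℂ^k are linearly independent, and every eigenvalue of J has multiplicity at most k. -/
open Matrix Polynomial

noncomputable section

/-- `Esel k N b` is the block selection matrix `E_{b+1} ∈ ℂ^{N×k}` whose rows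
`b*k, …, b*k + (k-1)` form the identity `I_k` (zero-based indexing). -/
def Esel (k N : ℕ) (b : ℕ) : Matrix (Fin N) (Fin k) ℂ :=
  Matrix.of fun i a => if (i : ℕ) = b * k + (a : ℕ) then 1 else 0

/-- The last (possibly smaller) block selection matrix `E_n ∈ ℂ^{N×(k-ℓ)}`. -/
def EselLast (k n ℓ : ℕ) : Matrix (Fin (n * k - ℓ)) (Fin (k - ℓ)) ℂ :=
  Matrix.of fun i a => if (i : ℕ) = (n - 1) * k + (a : ℕ) then 1 else 0

/-- A square matrix is upper triangular with (real) positive diagonal entries. -/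
def UpperTriPosDiag {k : ℕ} (M : Matrix (Fin k) (Fin k) ℂ) : Prop :=
  ∀ r c : Fin k, ((c : ℕ) < (r : ℕ) → M r c = 0) ∧ (r = c → 0 < (M r c).re ∧ (M r c).im = 0)

/-- A (rectangular) matrix is in row echelon form with positive pivots. -/
def RowEchelonPosPivots {r m : ℕ} (R : Matrix (Fin r) (Fin m) ℂ) : Prop :=
  ∃ p : Fin r → Fin m, StrictMono p ∧
    ∀ i : Fin r, (0 < (R i (p i)).re ∧ (R i (p i)).im = 0) ∧
      ∀ j : Fin m, (j : ℕ) < (p i : ℕ) → R i j = 0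

/-- The class `𝒥_{k,N}` (`N = n*k - ℓ`): Hermitian block tridiagonal matrices with
`k×k` blocks (the last diagonal block of size `(k-ℓ)×(k-ℓ)`), subdiagonal blocks
`B_0,…,B_{n-3}` upper triangular with positive diagonal and `B_{n-2}` in row echelon
form with positive pivots. -/
def IsJkN (k n ℓ : ℕ) (J : Matrix (Fin (n * k - ℓ)) (Fin (n * k - ℓ)) ℂ) : Prop :=
  J.IsHermitian ∧
  (∀ i j : Fin (n * k - ℓ),
      ((i : ℕ) / k + 2 ≤ (j : ℕ) / k ∨ (j : ℕ) / k + 2 ≤ (i : ℕ) / k) → J i j = 0) ∧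
  (∀ b : ℕ, b + 3 ≤ n →
      UpperTriPosDiag ((Esel k (n * k - ℓ) (b + 1))ᴴ * J * Esel k (n * k - ℓ) b)) ∧
  RowEchelonPosPivots ((EselLast k n ℓ)ᴴ * J * Esel k (n * k - ℓ) (n - 2))

/-! If `J v = μ v` and the first block of `v` vanishes, the remaining coordinates vanish one
at a time. Each coordinate `m` outside the first block is the lowest nonzero entry of some
earlier column `r` of `J`: the diagonal of an upper triangular subdiagonal block, or a pivot of
the echelon block. By Hermitian symmetry, row `r` of `J` then ends at column `m`, so row `r` of
`J v = μ v` reads `J r m * v m = 0`. Thus `E_1^*` is injective on every eigenspace. -/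

theorem Matrix.eq_zero_of_mulVec_eq_smul_of_staircase {ι R : Type*} [Fintype ι] [LinearOrder ι]
    [Ring R] [NoZeroDivisors R] {J : Matrix ι ι R} {μ : R} {v : ι → R} (s : Set ι)
    (hs : ∀ m ∉ s, v m = 0)
    (hstair : ∀ m ∈ s, ∃ r < m, J r m ≠ 0 ∧ ∀ j, m < j → J r j = 0)
    (hv : J *ᵥ v = μ • v) : v = 0 := by
  suffices ∀ m, v m = 0 from funext this
  intro m
  induction m using WellFoundedLT.induction with
  | _ m ih =>
  by_cases hm : m ∈ s
  swap
  · exact hs m hm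
  obtain ⟨r, hrm, hr, hr_zero⟩ := hstair m hm
  have hrow : J r m * v m = μ * v r := by
    rw [← smul_eq_mul μ, ← Pi.smul_apply, ← hv, mulVec, dotProduct, Finset.sum_eq_single m]
    · intro j _ hjm
      rcases lt_or_gt_of_ne hjm with hj | hj
      · rw [ih j hj, mul_zero]
      · rw [hr_zero j hj, zero_mul]
    · simp
  rw [ih r hrm, mul_zero] at hrow
  exact (mul_eq_zero.mp hrow).resolve_left hr

section Selection

variable {N k : ℕ}

theorem Esel_conjTranspose_mulVec_apply {b : ℕ} (v : Fin N → ℂ) {a : Fin k} {i : Fin N}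
    (hi : (i : ℕ) = b * k + a) : ((Esel k N b)ᴴ *ᵥ v) a = v i := by
  rw [mulVec, dotProduct, Finset.sum_eq_single i] <;> simp_all [Esel, Fin.ext_iff]

theorem mul_Esel_apply {m : Type*} {b : ℕ} (M : Matrix m (Fin N) ℂ) (x : m) {c : Fin k}
    {j : Fin N} (hj : (j : ℕ) = b * k + c) : (M * Esel k N b) x c = M x j := by
  rw [mul_apply, Finset.sum_eq_single j] <;> simp_all [Esel, Fin.ext_iff]

theorem Esel_conjTranspose_mul_apply {m : Type*} {b : ℕ} (M : Matrix (Fin N) m ℂ) {r : Fin k}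
    (x : m) {i : Fin N} (hi : (i : ℕ) = b * k + r) : ((Esel k N b)ᴴ * M) r x = M i x := by
  rw [mul_apply, Finset.sum_eq_single i] <;> simp_all [Esel, Fin.ext_iff]

theorem EselLast_conjTranspose_mul_apply {m : Type*} {n ℓ : ℕ} (M : Matrix (Fin (n * k - ℓ)) m ℂ)
    {r : Fin (k - ℓ)} (x : m) {i : Fin (n * k - ℓ)} (hi : (i : ℕ) = (n - 1) * k + r) :
    ((EselLast k n ℓ)ᴴ * M) r x = M i x := by
  rw [mul_apply, Finset.sum_eq_single i] <;> simp_all [EselLast, Fin.ext_iff]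

end Selection

namespace IsJkN

variable {k n ℓ : ℕ} {J : Matrix (Fin (n * k - ℓ)) (Fin (n * k - ℓ)) ℂ}

theorem apply_subdiag_eq_zero (hJ : IsJkN k n ℓ J) {b : ℕ} (hb : b + 3 ≤ n)
    {i j : Fin (n * k - ℓ)} {r c : Fin k} (hi : (i : ℕ) = b * k + k + r)
    (hj : (j : ℕ) = b * k + c) (hcr : c < r) : J i j = 0 := by
  have h := (hJ.2.2.1 b hb r c).1 hcr
  rwa [mul_Esel_apply _ _ hj, Esel_conjTranspose_mul_apply _ _ (by rw [hi]; ring)] at h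

theorem apply_subdiag_ne_zero (hJ : IsJkN k n ℓ J) {b : ℕ} (hb : b + 3 ≤ n)
    {i j : Fin (n * k - ℓ)} {a : Fin k} (hi : (i : ℕ) = b * k + k + a)
    (hj : (j : ℕ) = b * k + a) : J i j ≠ 0 := by
  have h := (hJ.2.2.1 b hb a a).2 rfl
  rw [mul_Esel_apply _ _ hj, Esel_conjTranspose_mul_apply _ _ (by rw [hi]; ring)] at h
  exact fun h0 => by simp [h0] at h

theorem exists_col_of_lt (hJ : IsJkN k n ℓ J) (m : Fin (n * k - ℓ)) (hkm : k ≤ m)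
    (hm : m < (n - 1) * k) : ∃ r < m, J m r ≠ 0 ∧ ∀ j, m < j → J j r = 0 := by
  have hk : 0 < k := Nat.pos_of_ne_zero (by rintro rfl; simp at hm)
  obtain ⟨q, hq_def⟩ : ∃ q, (m : ℕ) / k = q := ⟨_, rfl⟩
  have hma : (m : ℕ) = q * k + (m : ℕ) % k := hq_def ▸ (Nat.div_add_mod' m k).symm
  have ha : (m : ℕ) % k < k := Nat.mod_lt _ hk
  have hq1 : 1 ≤ q := hq_def ▸ (Nat.le_div_iff_mul_le hk).2 (by simpa)
  have hq : k ≤ q * k := Nat.le_mul_of_pos_left k hq1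
  have hqn : q + 2 ≤ n := by have := hq_def ▸ (Nat.div_lt_iff_lt_mul hk).2 hm; omega
  have hqk : (q - 1) * k = q * k - k := Nat.sub_one_mul q k
  refine ⟨⟨(q - 1) * k + (m : ℕ) % k, by omega⟩, Fin.lt_def.2 (by simp only; omega), ?_, ?_⟩
  · exact hJ.apply_subdiag_ne_zero (a := ⟨_, ha⟩) (by omega) (by simp only; omega) rfl
  intro j hj
  rw [Fin.lt_def] at hj
  by_cases hjq : (j : ℕ) < q * k + k
  · exact hJ.apply_subdiag_eq_zero (r := ⟨(j : ℕ) - q * k, by omega⟩) (c := ⟨_, ha⟩)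
      (by omega) (by simp only; omega) rfl (Fin.lt_def.2 (by simp only; omega))
  · refine hJ.2.1 j _ (Or.inr ?_)
    have hr : ((q - 1) * k + (m : ℕ) % k) / k < q := (Nat.div_lt_iff_lt_mul hk).2 (by omega)
    have hj' : q + 1 ≤ (j : ℕ) / k := (Nat.le_div_iff_mul_le hk).2 (by rw [add_one_mul]; omega)
    simp only
    omega

theorem exists_col_of_ge (hJ : IsJkN k n ℓ J) (m : Fin (n * k - ℓ)) (hkm : k ≤ m)
    (hm : (n - 1) * k ≤ m) : ∃ r < m, J m r ≠ 0 ∧ ∀ j, m < j → J j r = 0 := by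
  obtain ⟨p, hp, hpiv⟩ := hJ.2.2.2
  have hentry : ∀ (c : Fin (k - ℓ)) (x : Fin k) (i j : Fin (n * k - ℓ)),
      (i : ℕ) = (n - 1) * k + c → (j : ℕ) = (n - 2) * k + x →
      ((EselLast k n ℓ)ᴴ * J * Esel k (n * k - ℓ) (n - 2)) c x = J i j :=
    fun c x i j hi hj => by rw [mul_Esel_apply _ _ hj, EselLast_conjTranspose_mul_apply _ _ hi]
  have hn : 2 ≤ n := by
    by_contra! h
    interval_cases n <;> simp at hm hkm <;> omega
  have hnk : (n - 1) * k = n * k - k := Nat.sub_one_mul n k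
  have hnk' : (n - 2) * k = n * k - 2 * k := Nat.sub_mul n 2 k
  have hk : 2 * k ≤ n * k := Nat.mul_le_mul_right k hn
  let c : Fin (k - ℓ) := ⟨(m : ℕ) - (n - 1) * k, by omega⟩
  have hpc := (p c).isLt
  let r : Fin (n * k - ℓ) := ⟨(n - 2) * k + p c, by omega⟩
  refine ⟨r, Fin.lt_def.2 (by simp only [r]; omega), ?_, fun j hj => ?_⟩
  · have h := (hpiv c).1.1
    rw [hentry c (p c) m r (by simp only [c]; omega) rfl] at h
    exact fun h0 => by simp [h0] at h
  rw [Fin.lt_def] at hj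
  let c' : Fin (k - ℓ) := ⟨(j : ℕ) - (n - 1) * k, by omega⟩
  have hlt : p c < p c' := hp (Fin.lt_def.2 (by simp only [c, c']; omega))
  rw [← hentry c' (p c) j r (by simp only [c']; omega) rfl]
  exact (hpiv c').2 _ hlt

theorem exists_row_of_le (hJ : IsJkN k n ℓ J) (m : Fin (n * k - ℓ)) (hkm : k ≤ m) :
    ∃ r < m, J r m ≠ 0 ∧ ∀ j, m < j → J r j = 0 := by
  obtain ⟨r, hrm, hr, hr_zero⟩ : ∃ r < m, J m r ≠ 0 ∧ ∀ j, m < j → J j r = 0 :=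
    if hm : (m : ℕ) < (n - 1) * k then hJ.exists_col_of_lt m hkm hm
    else hJ.exists_col_of_ge m hkm (not_lt.1 hm)
  refine ⟨r, hrm, ?_, fun j hj => ?_⟩
  · rw [← hJ.1.apply]
    exact star_ne_zero.2 hr
  · rw [← hJ.1.apply, hr_zero j hj, star_zero]

theorem eq_zero_of_mulVec_eq_smul (hJ : IsJkN k n ℓ J) {μ : ℂ} {v : Fin (n * k - ℓ) → ℂ}
    (hv : J *ᵥ v = μ • v) (hhead : (Esel k (n * k - ℓ) 0)ᴴ *ᵥ v = 0) : v = 0 := by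
  refine eq_zero_of_mulVec_eq_smul_of_staircase {m | k ≤ (m : ℕ)} (fun m hm => ?_)
    hJ.exists_row_of_le hv
  have h := congrFun hhead ⟨m, not_le.1 hm⟩
  rwa [Esel_conjTranspose_mulVec_apply (i := m) v (by simp)] at h

theorem injOn_eigenspace (hJ : IsJkN k n ℓ J) (μ : ℂ) :
    Set.InjOn (Esel k (n * k - ℓ) 0)ᴴ.mulVecLin (Module.End.eigenspace (toLin' J) μ) :=
  LinearMap.injOn_of_disjoint_ker subset_rfl <| Submodule.disjoint_def.2 fun _ hv hhead =>
    hJ.eq_zero_of_mulVec_eq_smul (by simpa using Module.End.mem_eigenspace_iff.1 hv) hhead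

end IsJkN

theorem firstBlock_injective_on_eigenspaces_general
    (k n ℓ : ℕ)
    (J : Matrix (Fin (n * k - ℓ)) (Fin (n * k - ℓ)) ℂ) (hJ : IsJkN k n ℓ J) :
    (∀ (lam : ℝ) (v w : Fin (n * k - ℓ) → ℂ),
        J.mulVec v = (lam : ℂ) • v → J.mulVec w = (lam : ℂ) • w →
        (Esel k (n * k - ℓ) 0)ᴴ.mulVec v = (Esel k (n * k - ℓ) 0)ᴴ.mulVec w → v = w) ∧
    (∀ (lam : ℝ) (p : ℕ) (vhat : Fin p → (Fin (n * k - ℓ) → ℂ)),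
        (∀ i, J.mulVec (vhat i) = (lam : ℂ) • vhat i) →
        LinearIndependent ℂ vhat →
        LinearIndependent ℂ (fun i => (Esel k (n * k - ℓ) 0)ᴴ.mulVec (vhat i))) ∧
    (∀ lam : ℝ,
        Module.finrank ℂ (Module.End.eigenspace (Matrix.toLin' J) ((lam : ℂ))) ≤ k) := by
  have mem_eigenspace {μ : ℂ} {v : Fin (n * k - ℓ) → ℂ} (hv : J *ᵥ v = μ • v) :
      v ∈ Module.End.eigenspace (toLin' J) μ :=
    Module.End.mem_eigenspace_iff.2 (by rwa [toLin'_apply])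
  refine ⟨fun lam v w hv hw => hJ.injOn_eigenspace lam (mem_eigenspace hv) (mem_eigenspace hw),
    fun lam p vhat heig hli => ?_, fun lam => ?_⟩
  · have hspan : Submodule.span ℂ (Set.range vhat) ≤ Module.End.eigenspace (toLin' J) lam :=
      Submodule.span_le.2 (Set.range_subset_iff.2 fun i => mem_eigenspace (heig i))
    exact ((Esel k (n * k - ℓ) 0)ᴴ.mulVecLin.linearIndependent_iff_of_injOn
      ((hJ.injOn_eigenspace lam).mono hspan)).2 hli
  · calc Module.finrank ℂ (Module.End.eigenspace (toLin' J) lam)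
        ≤ Module.finrank ℂ (Fin k → ℂ) :=
          LinearMap.finrank_le_finrank_of_injective (f := (Esel k (n * k - ℓ) 0)ᴴ.mulVecLin ∘ₗ
            (Module.End.eigenspace (toLin' J) lam).subtype)
            fun x y hxy => Subtype.ext (hJ.injOn_eigenspace lam x.2 y.2 hxy)
      _ = k := Module.finrank_fin_fun ℂ

/-- For `J ∈ 𝒥_{k,N}`, the map sending an eigenvector to its first `k`
coordinates `E_1^* v` is injective on each eigenspace; consequently, linearly independent
eigenvectors for a common eigenvalue have linearly independent first-`k`-coordinate
vectors, and every eigenvalue of `J` has multiplicity at most `k`. -/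
theorem firstBlock_injective_on_eigenspaces
    (k n ℓ : ℕ) (hk : 1 ≤ k) (hn : 2 ≤ n) (hℓ : ℓ < k)
    (J : Matrix (Fin (n * k - ℓ)) (Fin (n * k - ℓ)) ℂ) (hJ : IsJkN k n ℓ J) :
    (∀ (lam : ℝ) (v w : Fin (n * k - ℓ) → ℂ),
        J.mulVec v = (lam : ℂ) • v → J.mulVec w = (lam : ℂ) • w →
        (Esel k (n * k - ℓ) 0)ᴴ.mulVec v = (Esel k (n * k - ℓ) 0)ᴴ.mulVec w → v = w) ∧
    (∀ (lam : ℝ) (p : ℕ) (vhat : Fin p → (Fin (n * k - ℓ) → ℂ)),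
        (∀ i, J.mulVec (vhat i) = (lam : ℂ) • vhat i) →
        LinearIndependent ℂ vhat →
        LinearIndependent ℂ (fun i => (Esel k (n * k - ℓ) 0)ᴴ.mulVec (vhat i))) ∧
    (∀ lam : ℝ,
        Module.finrank ℂ (Module.End.eigenspace (Matrix.toLin' J) ((lam : ℂ))) ≤ k) :=
  firstBlock_injective_on_eigenspaces_general k n ℓ J hJ
end
end

section
/- Let J ∈ 𝒥_{k,N} with blocks A_0,…,A_{n−1} and B_0,…,B_{n−2}. Define matrix polynomials by P_{−1}(x) ≡ 0, P_0(x) ≡ I_k, and for j = 1,…,n−1, P_j(x) = (x P_{j−1}(x) − P_{j−1}(x) A_{j−1} − P_{j−2}(x) B_{j−2}^*) B_{j−1}^†, where B_{j−1}^† = B_{j−1}^{−1} for j ≤ n−2 and B_{n−2}^† = B_{n−2}^*(B_{n−2} B_{n−2}^*)^{−1} (a right inverse), and B_{−1}^* is irrelevant since P_{−1} = 0. Then for every j = 0,…,n−1, P_j(J) ∘ E_1 = E_{j+1}. -/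
open Matrix Polynomial

noncomputable section

/-- The diagonal block `A_b` of `J` (zero-padded to size `k×k` for the last block). -/
def Ablk (k n ℓ : ℕ) (J : Matrix (Fin (n * k - ℓ)) (Fin (n * k - ℓ)) ℂ) (b : ℕ) :
    Matrix (Fin k) (Fin k) ℂ :=
  (Esel k (n * k - ℓ) b)ᴴ * J * Esel k (n * k - ℓ) b

/-- The subdiagonal block `B_b` of `J` (zero-padded to size `k×k` for the last block). -/
def Bblk (k n ℓ : ℕ) (J : Matrix (Fin (n * k - ℓ)) (Fin (n * k - ℓ)) ℂ) (b : ℕ) :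
    Matrix (Fin k) (Fin k) ℂ :=
  (Esel k (n * k - ℓ) (b + 1))ᴴ * J * Esel k (n * k - ℓ) b

/-- The genuine last subdiagonal block `B_{n-2} ∈ ℂ^{(k-ℓ)×k}` of `J`. -/
def BblkLast (k n ℓ : ℕ) (J : Matrix (Fin (n * k - ℓ)) (Fin (n * k - ℓ)) ℂ) :
    Matrix (Fin (k - ℓ)) (Fin k) ℂ :=
  (EselLast k n ℓ)ᴴ * J * Esel k (n * k - ℓ) (n - 2)

/-- The matrix polynomials `P_j` built from the blocks of `J` via the recurrence
`P_j(x) = (x P_{j-1}(x) - P_{j-1}(x) A_{j-1} - P_{j-2}(x) B_{j-2}^*) B_{j-1}⁻¹`,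
with `P_{-1} ≡ 0` and `P_0 ≡ I_k`. -/
def Ppoly (k n ℓ : ℕ) (J : Matrix (Fin (n * k - ℓ)) (Fin (n * k - ℓ)) ℂ) :
    ℕ → Polynomial (Matrix (Fin k) (Fin k) ℂ)
  | 0 => 1
  | 1 => (X - C (Ablk k n ℓ J 0)) * C ((Bblk k n ℓ J 0)⁻¹)
  | (j + 2) =>
      (X * Ppoly k n ℓ J (j + 1) - Ppoly k n ℓ J (j + 1) * C (Ablk k n ℓ J (j + 1))
          - Ppoly k n ℓ J j * C ((Bblk k n ℓ J j)ᴴ)) * C ((Bblk k n ℓ J (j + 1))⁻¹)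

/-- The matrix polynomial map `P(J) ∘ E := Σ_i J^i E Φ_i`, where `Φ_i` are the
coefficients of the matrix polynomial `P`. -/
def polyMap {k N : ℕ} (J : Matrix (Fin N) (Fin N) ℂ)
    (P : Polynomial (Matrix (Fin k) (Fin k) ℂ)) (E : Matrix (Fin N) (Fin k) ℂ) :
    Matrix (Fin N) (Fin k) ℂ :=
  ∑ i ∈ Finset.range (P.natDegree + 1), (J ^ i) * E * P.coeff i

lemma div_eq_iff_blk {k : ℕ} (hk : 0 < k) (i c : ℕ) : i / k = c ↔ c * k ≤ i ∧ i < c * k + k := by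
  constructor
  · rintro rfl
    refine ⟨Nat.div_mul_le_self i k, ?_⟩
    have h1 : i / k < i / k + 1 := Nat.lt_succ_self _
    have h2 := (Nat.div_lt_iff_lt_mul hk).1 h1
    have : (i/k+1)*k = i/k*k + k := by ring
    omega
  · rintro ⟨h1, h2⟩
    have h3 : c ≤ i / k := (Nat.le_div_iff_mul_le hk).2 h1
    have h5 : (c+1)*k = c*k+k := by ring
    have h4 : i / k < c + 1 := (Nat.div_lt_iff_lt_mul hk).2 (by omega)
    omega

lemma sum_indicator {N : ℕ} (t : ℕ) (ht : t < N) (f : Fin N → ℂ) :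
    ∑ m : Fin N, (if (m : ℕ) = t then f m else 0) = f ⟨t, ht⟩ := by
  rw [Finset.sum_eq_single (⟨t, ht⟩ : Fin N)]
  · simp
  · intro m _ hm
    rw [if_neg]
    intro h; exact hm (Fin.ext h)
  · simp

lemma sum_block {K : ℕ} (t i : ℕ) (f : ℕ → ℂ) :
    ∑ x : Fin K, (if i = t + (x : ℕ) then f (t + (x : ℕ)) else 0)
      = if t ≤ i ∧ i < t + K then f i else 0 := by
  by_cases h : t ≤ i ∧ i < t + K
  · rw [if_pos h, Finset.sum_eq_single (⟨i - t, by omega⟩ : Fin K)]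
    · rw [if_pos (by simp; omega)]
      congr 1; simp; omega
    · intro x _ hx
      rw [if_neg]
      intro he
      exact hx (by apply Fin.ext; simp; omega)
    · simp
  · rw [if_neg h]
    apply Finset.sum_eq_zero
    intro x _
    rw [if_neg]
    have := x.isLt
    omega

lemma mul_Esel {k N r : ℕ} (M : Matrix (Fin r) (Fin N) ℂ) (b : ℕ) (h : b*k + k ≤ N)
    (i : Fin r) (a : Fin k) :
    (M * Esel k N b) i a = M i ⟨b*k + a, by have := a.isLt; omega⟩ := by
  rw [Matrix.mul_apply]
  calc ∑ m : Fin N, M i m * Esel k N b m a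
      = ∑ m : Fin N, (if (m:ℕ) = b*k + a then M i m else 0) := by
        apply Finset.sum_congr rfl
        intro m _
        simp only [Esel, Matrix.of_apply, mul_ite, mul_one, mul_zero]
    _ = _ := sum_indicator _ (by have := a.isLt; omega) _

lemma conjT_Esel_mul {k N : ℕ} (M : Matrix (Fin N) (Fin N) ℂ) (c : ℕ) (h : c*k + k ≤ N)
    (x : Fin k) (m : Fin N) :
    ((Esel k N c)ᴴ * M) x m = M ⟨c*k + x, by have := x.isLt; omega⟩ m := by
  rw [Matrix.mul_apply]
  calc ∑ m' : Fin N, (Esel k N c)ᴴ x m' * M m' m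
      = ∑ m' : Fin N, (if (m':ℕ) = c*k + x then M m' m else 0) := by
        apply Finset.sum_congr rfl
        intro m' _
        simp only [Esel, Matrix.conjTranspose_apply, Matrix.of_apply]
        split <;> simp
    _ = _ := sum_indicator _ (by have := x.isLt; omega) _

lemma conjT_EselLast_mul {k n ℓ : ℕ} (hn : 1 ≤ n) (hℓ : ℓ ≤ k)
    (M : Matrix (Fin (n*k-ℓ)) (Fin (n*k-ℓ)) ℂ)
    (x : Fin (k-ℓ)) (m : Fin (n*k-ℓ)) :
    ((EselLast k n ℓ)ᴴ * M) x m
      = M ⟨(n-1)*k + x, by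
          have := x.isLt
          have h2 : n*k = (n-1)*k + k := by
            cases n with
            | zero => omega
            | succ p => simp [Nat.succ_mul]
          omega⟩ m := by
  rw [Matrix.mul_apply]
  calc ∑ m' : Fin (n*k-ℓ), (EselLast k n ℓ)ᴴ x m' * M m' m
      = ∑ m' : Fin (n*k-ℓ), (if (m':ℕ) = (n-1)*k + x then M m' m else 0) := by
        apply Finset.sum_congr rfl
        intro m' _
        simp only [EselLast, Matrix.conjTranspose_apply, Matrix.of_apply]
        split <;> simp
    _ = _ := sum_indicator _ _ _

lemma Esel_left_mul {k N r : ℕ} (c : ℕ) (M : Matrix (Fin k) (Fin r) ℂ)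
    (i : Fin N) (a : Fin r) :
    (Esel k N c * M) i a
      = if hc : c*k ≤ (i:ℕ) ∧ (i:ℕ) < c*k + k then M ⟨(i:ℕ) - c*k, by omega⟩ a else 0 := by
  rw [Matrix.mul_apply]
  simp only [Esel, Matrix.of_apply, ite_mul, one_mul, zero_mul]
  by_cases hc : c*k ≤ (i:ℕ) ∧ (i:ℕ) < c*k + k
  · rw [dif_pos hc, Finset.sum_eq_single (⟨(i:ℕ) - c*k, by omega⟩ : Fin k)]
    · rw [if_pos (by simp; omega)]
    · intro x _ hx
      rw [if_neg]
      intro he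
      exact hx (by apply Fin.ext; simp; omega)
    · simp
  · rw [dif_neg hc]
    apply Finset.sum_eq_zero
    intro x _
    rw [if_neg]
    have := x.isLt
    omega

lemma EselLast_left_mul {k n ℓ r : ℕ} (M : Matrix (Fin (k-ℓ)) (Fin r) ℂ)
    (i : Fin (n*k-ℓ)) (a : Fin r) :
    (EselLast k n ℓ * M) i a
      = if hc : (n-1)*k ≤ (i:ℕ) ∧ (i:ℕ) < (n-1)*k + (k-ℓ) then M ⟨(i:ℕ) - (n-1)*k, by omega⟩ a else 0 := by
  rw [Matrix.mul_apply]
  simp only [EselLast, Matrix.of_apply, ite_mul, one_mul, zero_mul]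
  by_cases hc : (n-1)*k ≤ (i:ℕ) ∧ (i:ℕ) < (n-1)*k + (k-ℓ)
  · rw [dif_pos hc, Finset.sum_eq_single (⟨(i:ℕ) - (n-1)*k, by omega⟩ : Fin (k-ℓ))]
    · rw [if_pos (by simp; omega)]
    · intro x _ hx
      rw [if_neg]
      intro he
      exact hx (by apply Fin.ext; simp; omega)
    · simp
  · rw [dif_neg hc]
    apply Finset.sum_eq_zero
    intro x _
    rw [if_neg]
    have := x.isLt
    omega

lemma proj_entry {k N : ℕ} (hk : 0 < k) (J : Matrix (Fin N) (Fin N) ℂ) (c b : ℕ)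
    (hc : c*k + k ≤ N) (hbk : b*k + k ≤ N) (i : Fin N) (a : Fin k) :
    (Esel k N c * ((Esel k N c)ᴴ * J * Esel k N b)) i a
      = if (i:ℕ)/k = c then J i ⟨b*k + a, by have := a.isLt; omega⟩ else 0 := by
  rw [Esel_left_mul]
  by_cases h : c*k ≤ (i:ℕ) ∧ (i:ℕ) < c*k + k
  · rw [dif_pos h, if_pos ((div_eq_iff_blk hk _ _).2 h)]
    rw [mul_Esel _ b hbk, conjT_Esel_mul _ c hc]
    congr 1
    apply Fin.ext
    simp
    omega
  · rw [dif_neg h, if_neg]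
    intro hq
    exact h ((div_eq_iff_blk hk _ _).1 hq)

lemma lastproj_entry {k n ℓ : ℕ} (hk : 0 < k) (hn : 2 ≤ n) (hℓ : ℓ < k)
    (J : Matrix (Fin (n*k-ℓ)) (Fin (n*k-ℓ)) ℂ) (b : ℕ)
    (hbk : b*k + k ≤ n*k-ℓ) (i : Fin (n*k-ℓ)) (a : Fin k) :
    (EselLast k n ℓ * ((EselLast k n ℓ)ᴴ * J * Esel k (n*k-ℓ) b)) i a
      = if (i:ℕ)/k = n-1 then J i ⟨b*k + a, by have := a.isLt; omega⟩ else 0 := by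
  have hNk : n*k = (n-1)*k + k := by
    cases n with
    | zero => omega
    | succ p => simp [Nat.succ_mul]
  have hi := i.isLt
  rw [EselLast_left_mul]
  by_cases h : (n-1)*k ≤ (i:ℕ) ∧ (i:ℕ) < (n-1)*k + (k-ℓ)
  · rw [dif_pos h, if_pos ((div_eq_iff_blk hk _ _).2 (by omega))]
    rw [mul_Esel _ b hbk, conjT_EselLast_mul (by omega) (by omega)]
    congr 1
    apply Fin.ext
    simp
    omega
  · rw [dif_neg h, if_neg]
    intro hq
    have := (div_eq_iff_blk hk _ _).1 hq
    omega

lemma block_col (k n ℓ : ℕ) (hk : 1 ≤ k) (hn : 2 ≤ n) (hℓ : ℓ < k)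
    (J : Matrix (Fin (n*k-ℓ)) (Fin (n*k-ℓ)) ℂ) (hJ : IsJkN k n ℓ J)
    (b : ℕ) (hb : b + 2 ≤ n) :
    J * Esel k (n*k-ℓ) b
      = (if b = 0 then 0 else Esel k (n*k-ℓ) (b-1) * (Bblk k n ℓ J (b-1))ᴴ)
        + Esel k (n*k-ℓ) b * Ablk k n ℓ J b
        + (if b + 2 = n then EselLast k n ℓ * BblkLast k n ℓ J
           else Esel k (n*k-ℓ) (b+1) * Bblk k n ℓ J b) := by
  have hNk : n*k = (n-1)*k + k := by
    cases n with
    | zero => omega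
    | succ p => simp [Nat.succ_mul]
  have hmul : ∀ c : ℕ, c + 2 ≤ n → c*k + k ≤ n*k - ℓ := by
    intro c hc
    have h1 : (c+1)*k ≤ (n-1)*k := Nat.mul_le_mul_right k (by omega)
    have h2 : (c+1)*k = c*k + k := by ring
    omega
  have hbk : b*k + k ≤ n*k - ℓ := hmul b hb
  have hband := hJ.2.1
  have hBconj : ∀ c : ℕ, (Bblk k n ℓ J c)ᴴ
      = (Esel k (n*k-ℓ) c)ᴴ * J * Esel k (n*k-ℓ) (c+1) := by
    intro c
    show ((Esel k (n*k-ℓ) (c+1))ᴴ * J * Esel k (n*k-ℓ) c)ᴴ = _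
    rw [Matrix.conjTranspose_mul, Matrix.conjTranspose_mul,
      Matrix.conjTranspose_conjTranspose, hJ.1.eq, ← Matrix.mul_assoc]
  by_cases hb0 : b = 0 <;> by_cases hbn : b + 2 = n
  · -- b = 0, n = 2
    subst hb0
    rw [if_pos rfl, if_pos hbn]
    have h2 : n - 2 = 0 := by omega
    unfold Ablk BblkLast
    rw [h2]
    ext i a
    have hi := i.isLt
    have ha := a.isLt
    have hle : n*k - ℓ ≤ n*k := Nat.sub_le _ _
    obtain ⟨q, hiq⟩ : ∃ q, (i:ℕ)/k = q := ⟨_, rfl⟩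
    have hq := (div_eq_iff_blk hk (i:ℕ) q).1 hiq
    have hqn : q < n := by
      have h := (Nat.div_lt_iff_lt_mul hk).2 (show (i:ℕ) < n*k by omega)
      omega
    have hj0 : (0*k + (a:ℕ))/k = 0 := (div_eq_iff_blk hk _ _).2 (by omega)
    have hband' : ∀ (t : ℕ) (ht : t < n*k-ℓ),
        (q + 2 ≤ t/k ∨ t/k + 2 ≤ q) → J i ⟨t, ht⟩ = 0 :=
      fun t ht h => hband i ⟨t, ht⟩ (by rw [hiq]; exact h)
    rw [mul_Esel J 0 hbk]
    simp only [Matrix.add_apply, Matrix.zero_apply]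
    rw [proj_entry hk J 0 0 hbk hbk, lastproj_entry hk hn hℓ J 0 hbk]
    rw [hiq]
    split_ifs <;> (try simp only [zero_add, add_zero]) <;>
      first
        | rfl
        | (exfalso; omega)
        | (exact hband' _ _ (by rw [hj0]; omega))
  · -- b = 0, n ≥ 3
    subst hb0
    rw [if_pos rfl, if_neg hbn]
    unfold Ablk Bblk
    ext i a
    have hi := i.isLt
    have ha := a.isLt
    have hle : n*k - ℓ ≤ n*k := Nat.sub_le _ _
    obtain ⟨q, hiq⟩ : ∃ q, (i:ℕ)/k = q := ⟨_, rfl⟩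
    have hq := (div_eq_iff_blk hk (i:ℕ) q).1 hiq
    have hqn : q < n := by
      have h := (Nat.div_lt_iff_lt_mul hk).2 (show (i:ℕ) < n*k by omega)
      omega
    have hj0 : (0*k + (a:ℕ))/k = 0 := (div_eq_iff_blk hk _ _).2 (by omega)
    have hband' : ∀ (t : ℕ) (ht : t < n*k-ℓ),
        (q + 2 ≤ t/k ∨ t/k + 2 ≤ q) → J i ⟨t, ht⟩ = 0 :=
      fun t ht h => hband i ⟨t, ht⟩ (by rw [hiq]; exact h)
    rw [mul_Esel J 0 hbk]
    simp only [Matrix.add_apply, Matrix.zero_apply]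
    rw [proj_entry hk J 0 0 hbk hbk, proj_entry hk J 1 0 (hmul 1 (by omega)) hbk]
    rw [hiq]
    split_ifs <;> (try simp only [zero_add, add_zero]) <;>
      first
        | rfl
        | (exfalso; omega)
        | (exact hband' _ _ (by rw [hj0]; omega))
  · -- b ≥ 1, b + 2 = n
    obtain ⟨c, rfl⟩ : ∃ c, b = c + 1 := ⟨b - 1, by omega⟩
    rw [if_neg hb0, if_pos hbn]
    simp only [Nat.add_sub_cancel]
    rw [hBconj c]
    unfold Ablk BblkLast
    rw [show n - 2 = c + 1 from by omega]
    ext i a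
    have hi := i.isLt
    have ha := a.isLt
    have hle : n*k - ℓ ≤ n*k := Nat.sub_le _ _
    obtain ⟨q, hiq⟩ : ∃ q, (i:ℕ)/k = q := ⟨_, rfl⟩
    have hq := (div_eq_iff_blk hk (i:ℕ) q).1 hiq
    have hqn : q < n := by
      have h := (Nat.div_lt_iff_lt_mul hk).2 (show (i:ℕ) < n*k by omega)
      omega
    have hj0 : ((c+1)*k + (a:ℕ))/k = c+1 :=
      (div_eq_iff_blk hk _ _).2 (by omega)
    have hband' : ∀ (t : ℕ) (ht : t < n*k-ℓ),
        (q + 2 ≤ t/k ∨ t/k + 2 ≤ q) → J i ⟨t, ht⟩ = 0 :=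
      fun t ht h => hband i ⟨t, ht⟩ (by rw [hiq]; exact h)
    rw [mul_Esel J (c+1) hbk]
    simp only [Matrix.add_apply]
    rw [proj_entry hk J c (c+1) (hmul c (by omega)) hbk,
      proj_entry hk J (c+1) (c+1) hbk hbk,
      lastproj_entry hk hn hℓ J (c+1) hbk]
    rw [hiq]
    split_ifs <;> (try simp only [zero_add, add_zero]) <;>
      first
        | rfl
        | (exfalso; omega)
        | (exact hband' _ _ (by rw [hj0]; omega))
  · -- b ≥ 1, b + 2 < n
    obtain ⟨c, rfl⟩ : ∃ c, b = c + 1 := ⟨b - 1, by omega⟩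
    rw [if_neg hb0, if_neg hbn]
    simp only [Nat.add_sub_cancel]
    rw [hBconj c]
    unfold Ablk Bblk
    ext i a
    have hi := i.isLt
    have ha := a.isLt
    have hle : n*k - ℓ ≤ n*k := Nat.sub_le _ _
    obtain ⟨q, hiq⟩ : ∃ q, (i:ℕ)/k = q := ⟨_, rfl⟩
    have hq := (div_eq_iff_blk hk (i:ℕ) q).1 hiq
    have hqn : q < n := by
      have h := (Nat.div_lt_iff_lt_mul hk).2 (show (i:ℕ) < n*k by omega)
      omega
    have hj0 : ((c+1)*k + (a:ℕ))/k = c+1 :=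
      (div_eq_iff_blk hk _ _).2 (by omega)
    have hband' : ∀ (t : ℕ) (ht : t < n*k-ℓ),
        (q + 2 ≤ t/k ∨ t/k + 2 ≤ q) → J i ⟨t, ht⟩ = 0 :=
      fun t ht h => hband i ⟨t, ht⟩ (by rw [hiq]; exact h)
    rw [mul_Esel J (c+1) hbk]
    simp only [Matrix.add_apply]
    rw [proj_entry hk J c (c+1) (hmul c (by omega)) hbk,
      proj_entry hk J (c+1) (c+1) hbk hbk,
      proj_entry hk J (c+2) (c+1) (hmul (c+2) (by omega)) hbk]
    rw [hiq]
    split_ifs <;> (try simp only [zero_add, add_zero]) <;>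
      first
        | rfl
        | (exfalso; omega)
        | (exact hband' _ _ (by rw [hj0]; omega))


lemma upperTri_det_isUnit {k : ℕ} (M : Matrix (Fin k) (Fin k) ℂ) (h : UpperTriPosDiag M) :
    IsUnit M.det := by
  have ht : M.BlockTriangular id := fun i j hij => (h i j).1 hij
  rw [Matrix.det_of_upperTriangular ht, isUnit_iff_ne_zero, Finset.prod_ne_zero_iff]
  intro i _
  have h2 := (h i i).2 rfl
  intro hz
  rw [hz] at h2
  simp at h2

open scoped ComplexOrder in
lemma echelon_gram_isUnit {r m : ℕ} (R : Matrix (Fin r) (Fin m) ℂ)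
    (h : RowEchelonPosPivots R) : IsUnit (R * Rᴴ).det := by
  obtain ⟨p, hmono, hpiv⟩ := h
  rw [isUnit_iff_ne_zero]
  intro hdet
  obtain ⟨v, hv0, hv⟩ := Matrix.exists_mulVec_eq_zero_iff.2 hdet
  have hw : Rᴴ *ᵥ v = 0 := by
    apply dotProduct_star_self_eq_zero.1
    calc star (Rᴴ *ᵥ v) ⬝ᵥ (Rᴴ *ᵥ v)
        = (star v ᵥ* R) ⬝ᵥ (Rᴴ *ᵥ v) := by
          rw [Matrix.star_mulVec, Matrix.conjTranspose_conjTranspose]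
      _ = star v ⬝ᵥ (R *ᵥ (Rᴴ *ᵥ v)) := (Matrix.dotProduct_mulVec _ _ _).symm
      _ = star v ⬝ᵥ ((R * Rᴴ) *ᵥ v) := by rw [Matrix.mulVec_mulVec]
      _ = 0 := by rw [hv, dotProduct_zero]
  have hne : (Finset.univ.filter (fun i => v i ≠ 0)).Nonempty := by
    by_contra hemp
    apply hv0
    funext i
    by_contra hvi
    exact hemp ⟨i, Finset.mem_filter.2 ⟨Finset.mem_univ _, hvi⟩⟩
  set i0 := (Finset.univ.filter (fun i => v i ≠ 0)).min' hne with hi0def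
  have hi0 : v i0 ≠ 0 := (Finset.mem_filter.1 (Finset.min'_mem _ hne)).2
  have hmin : ∀ i, i < i0 → v i = 0 := by
    intro i hilt
    by_contra hvi
    exact absurd (Finset.min'_le _ i (Finset.mem_filter.2 ⟨Finset.mem_univ _, hvi⟩))
      (not_le.2 hilt)
  have hcol := congrFun hw (p i0)
  simp only [Matrix.mulVec, dotProduct, Matrix.conjTranspose_apply,
    Pi.zero_apply] at hcol
  rw [Finset.sum_eq_single i0] at hcol
  · rcases mul_eq_zero.1 hcol with h | h
    · rw [star_eq_zero] at h
      have hp := (hpiv i0).1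
      rw [h] at hp
      simp at hp
    · exact hi0 h
  · intro i _ hne2
    rcases lt_or_gt_of_ne hne2 with hlt | hgt
    · rw [hmin i hlt, mul_zero]
    · rw [(hpiv i).2 (p i0) (hmono hgt)]
      simp
  · simp

section PolyMapLemmas
variable {k N : ℕ} (J : Matrix (Fin N) (Fin N) ℂ) (E : Matrix (Fin N) (Fin k) ℂ)

lemma polyMap_eq_sum (P : Polynomial (Matrix (Fin k) (Fin k) ℂ)) (m : ℕ)
    (h : P.natDegree < m) :
    polyMap J P E = ∑ i ∈ Finset.range m, (J ^ i) * E * P.coeff i := by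
  unfold polyMap
  apply Finset.sum_subset
  · exact Finset.range_subset_range.2 h
  · intro i _ hi
    simp only [Finset.mem_range] at hi
    rw [Polynomial.coeff_eq_zero_of_natDegree_lt (by omega), Matrix.mul_zero]

lemma polyMap_add (P Q : Polynomial (Matrix (Fin k) (Fin k) ℂ)) :
    polyMap J (P + Q) E = polyMap J P E + polyMap J Q E := by
  have hd := Polynomial.natDegree_add_le P Q
  have h1 : P.natDegree ≤ max P.natDegree Q.natDegree := le_max_left _ _
  have h2 : Q.natDegree ≤ max P.natDegree Q.natDegree := le_max_right _ _
  rw [polyMap_eq_sum J E (P+Q) (max P.natDegree Q.natDegree + 1) (by omega),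
    polyMap_eq_sum J E P (max P.natDegree Q.natDegree + 1) (by omega),
    polyMap_eq_sum J E Q (max P.natDegree Q.natDegree + 1) (by omega),
    ← Finset.sum_add_distrib]
  apply Finset.sum_congr rfl
  intro i _
  rw [Polynomial.coeff_add, Matrix.mul_add]

lemma polyMap_sub (P Q : Polynomial (Matrix (Fin k) (Fin k) ℂ)) :
    polyMap J (P - Q) E = polyMap J P E - polyMap J Q E := by
  have hd := Polynomial.natDegree_sub_le P Q
  have h1 : P.natDegree ≤ max P.natDegree Q.natDegree := le_max_left _ _
  have h2 : Q.natDegree ≤ max P.natDegree Q.natDegree := le_max_right _ _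
  have hd' : (P - Q).natDegree ≤ max P.natDegree Q.natDegree := hd
  rw [polyMap_eq_sum J E (P-Q) (max P.natDegree Q.natDegree + 1) (by omega),
    polyMap_eq_sum J E P (max P.natDegree Q.natDegree + 1) (by omega),
    polyMap_eq_sum J E Q (max P.natDegree Q.natDegree + 1) (by omega),
    ← Finset.sum_sub_distrib]
  apply Finset.sum_congr rfl
  intro i _
  rw [Polynomial.coeff_sub, Matrix.mul_sub]

lemma polyMap_mul_C (P : Polynomial (Matrix (Fin k) (Fin k) ℂ))
    (M : Matrix (Fin k) (Fin k) ℂ) :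
    polyMap J (P * Polynomial.C M) E = polyMap J P E * M := by
  have hd : (P * Polynomial.C M).natDegree ≤ P.natDegree := by
    have h1 := Polynomial.natDegree_mul_le (p := P) (q := Polynomial.C M)
    have h2 : (Polynomial.C M).natDegree = 0 := Polynomial.natDegree_C M
    omega
  rw [polyMap_eq_sum J E (P * Polynomial.C M) (P.natDegree + 1) (by omega)]
  unfold polyMap
  rw [Matrix.sum_mul]
  apply Finset.sum_congr rfl
  intro i _
  rw [Polynomial.coeff_mul_C, ← Matrix.mul_assoc]

lemma polyMap_X_mul (P : Polynomial (Matrix (Fin k) (Fin k) ℂ)) :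
    polyMap J (Polynomial.X * P) E = J * polyMap J P E := by
  have hd : (Polynomial.X * P).natDegree ≤ P.natDegree + 1 := by
    have h1 := Polynomial.natDegree_mul_le (p := (Polynomial.X : Polynomial (Matrix (Fin k) (Fin k) ℂ))) (q := P)
    have h2 : (Polynomial.X : Polynomial (Matrix (Fin k) (Fin k) ℂ)).natDegree ≤ 1 :=
      Polynomial.natDegree_X_le
    omega
  rw [polyMap_eq_sum J E (Polynomial.X * P) (P.natDegree + 2) (by omega),
    Finset.sum_range_succ']
  simp only [Polynomial.coeff_X_mul]
  have h0 : (Polynomial.X * P).coeff 0 = 0 := by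
    rw [Polynomial.mul_coeff_zero, Polynomial.coeff_X_zero, Matrix.zero_mul]
  rw [h0, Matrix.mul_zero, add_zero]
  unfold polyMap
  rw [Matrix.mul_sum]
  apply Finset.sum_congr rfl
  intro i _
  rw [pow_succ']
  simp only [Matrix.mul_assoc]

lemma polyMap_one : polyMap J 1 E = E := by
  unfold polyMap
  simp

lemma polyMap_X : polyMap J Polynomial.X E = J * E := by
  have h : (Polynomial.X : Polynomial (Matrix (Fin k) (Fin k) ℂ)) = Polynomial.X * 1 :=
    (mul_one _).symm
  rw [h, polyMap_X_mul, polyMap_one]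

lemma polyMap_C (M : Matrix (Fin k) (Fin k) ℂ) :
    polyMap J (Polynomial.C M) E = E * M := by
  have h : (Polynomial.C M) = 1 * Polynomial.C M := (one_mul _).symm
  rw [h, polyMap_mul_C, polyMap_one]

end PolyMapLemmas


/-- For `J ∈ 𝒥_{k,N}`, the polynomials of the recurrence satisfy
`P_j(J) ∘ E_1 = E_{j+1}` for `j = 0,…,n-1`; for `j = n-1` the polynomial is
`P_{n-1}(x) = (x P_{n-2}(x) - P_{n-2}(x) A_{n-2} - P_{n-3}(x) B_{n-3}^*) B_{n-2}^†`
with `B_{n-2}^† = B_{n-2}^* (B_{n-2} B_{n-2}^*)⁻¹` the right inverse of the last block. -/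
theorem polyMap_of_banded_recurrence
    (k n ℓ : ℕ) (hk : 1 ≤ k) (hn : 2 ≤ n) (hℓ : ℓ < k)
    (J : Matrix (Fin (n * k - ℓ)) (Fin (n * k - ℓ)) ℂ) (hJ : IsJkN k n ℓ J) :
    (∀ j : ℕ, j + 2 ≤ n →
        polyMap J (Ppoly k n ℓ J j) (Esel k (n * k - ℓ) 0) = Esel k (n * k - ℓ) j) ∧
    polyMap J
        (X * Ppoly k n ℓ J (n - 2) - Ppoly k n ℓ J (n - 2) * C (Ablk k n ℓ J (n - 2))
          - (if n = 2 then 0 else Ppoly k n ℓ J (n - 3)) * C ((Bblk k n ℓ J (n - 3))ᴴ))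
        (Esel k (n * k - ℓ) 0)
      * ((BblkLast k n ℓ J)ᴴ * (BblkLast k n ℓ J * (BblkLast k n ℓ J)ᴴ)⁻¹)
    = EselLast k n ℓ := by
  have hBinv : ∀ b, b + 3 ≤ n → Bblk k n ℓ J b * (Bblk k n ℓ J b)⁻¹ = 1 := by
    intro b hb
    exact Matrix.mul_nonsing_inv _ (upperTri_det_isUnit _ (hJ.2.2.1 b hb))
  have key : ∀ j, j + 2 ≤ n →
      polyMap J (Ppoly k n ℓ J j) (Esel k (n*k-ℓ) 0) = Esel k (n*k-ℓ) j := by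
    intro j
    induction j using Nat.twoStepInduction with
    | zero =>
      intro _
      show polyMap J 1 (Esel k (n*k-ℓ) 0) = Esel k (n*k-ℓ) 0
      exact polyMap_one J _
    | one =>
      intro h3
      show polyMap J ((X - C (Ablk k n ℓ J 0)) * C ((Bblk k n ℓ J 0)⁻¹))
        (Esel k (n*k-ℓ) 0) = _
      rw [polyMap_mul_C, polyMap_sub, polyMap_X, polyMap_C]
      rw [block_col k n ℓ hk hn hℓ J hJ 0 (by omega), if_pos rfl, if_neg (by omega)]
      have e : (0 : Matrix (Fin (n*k-ℓ)) (Fin k) ℂ)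
            + Esel k (n*k-ℓ) 0 * Ablk k n ℓ J 0 + Esel k (n*k-ℓ) 1 * Bblk k n ℓ J 0
            - Esel k (n*k-ℓ) 0 * Ablk k n ℓ J 0
          = Esel k (n*k-ℓ) 1 * Bblk k n ℓ J 0 := by abel
      rw [e, Matrix.mul_assoc, hBinv 0 (by omega), Matrix.mul_one]
    | more j ih1 ih2 =>
      intro h
      show polyMap J ((X * Ppoly k n ℓ J (j+1) - Ppoly k n ℓ J (j+1) * C (Ablk k n ℓ J (j+1))
          - Ppoly k n ℓ J j * C ((Bblk k n ℓ J j)ᴴ)) * C ((Bblk k n ℓ J (j+1))⁻¹))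
          (Esel k (n*k-ℓ) 0) = _
      rw [polyMap_mul_C, polyMap_sub, polyMap_sub, polyMap_X_mul, polyMap_mul_C, polyMap_mul_C,
        ih1 (by omega), ih2 (by omega),
        block_col k n ℓ hk hn hℓ J hJ (j+1) (by omega), if_neg (by omega), if_neg (by omega)]
      simp only [Nat.add_sub_cancel]
      have e : Esel k (n*k-ℓ) j * (Bblk k n ℓ J j)ᴴ
            + Esel k (n*k-ℓ) (j+1) * Ablk k n ℓ J (j+1)
            + Esel k (n*k-ℓ) (j+2) * Bblk k n ℓ J (j+1)
          - Esel k (n*k-ℓ) (j+1) * Ablk k n ℓ J (j+1)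
          - Esel k (n*k-ℓ) j * (Bblk k n ℓ J j)ᴴ
          = Esel k (n*k-ℓ) (j+2) * Bblk k n ℓ J (j+1) := by abel
      rw [e, Matrix.mul_assoc, hBinv (j+1) (by omega), Matrix.mul_one]
  refine ⟨key, ?_⟩
  have hu : IsUnit (BblkLast k n ℓ J * (BblkLast k n ℓ J)ᴴ).det :=
    echelon_gram_isUnit _ hJ.2.2.2
  by_cases hn2 : n = 2
  · subst hn2
    have e2 : (2:ℕ) - 2 = 0 := rfl
    rw [if_pos rfl, zero_mul, sub_zero, e2]
    rw [polyMap_sub, polyMap_X_mul, polyMap_mul_C, key 0 (by omega)]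
    rw [block_col k 2 ℓ hk hn hℓ J hJ 0 (by omega), if_pos rfl, if_pos rfl]
    have e : (0 : Matrix (Fin (2*k-ℓ)) (Fin k) ℂ)
          + Esel k (2*k-ℓ) 0 * Ablk k 2 ℓ J 0
          + EselLast k 2 ℓ * BblkLast k 2 ℓ J
        - Esel k (2*k-ℓ) 0 * Ablk k 2 ℓ J 0
        = EselLast k 2 ℓ * BblkLast k 2 ℓ J := by abel
    rw [e, Matrix.mul_assoc, ← Matrix.mul_assoc (BblkLast k 2 ℓ J),
      Matrix.mul_nonsing_inv _ hu, Matrix.mul_one]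
  · rw [if_neg hn2]
    rw [polyMap_sub, polyMap_sub, polyMap_X_mul, polyMap_mul_C, polyMap_mul_C,
      key (n-2) (by omega), key (n-3) (by omega)]
    rw [block_col k n ℓ hk hn hℓ J hJ (n-2) (by omega), if_neg (by omega),
      if_pos (by omega : n - 2 + 2 = n), show n-2-1 = n-3 from by omega]
    have e : Esel k (n*k-ℓ) (n-3) * (Bblk k n ℓ J (n-3))ᴴ
          + Esel k (n*k-ℓ) (n-2) * Ablk k n ℓ J (n-2)
          + EselLast k n ℓ * BblkLast k n ℓ J
        - Esel k (n*k-ℓ) (n-2) * Ablk k n ℓ J (n-2)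
        - Esel k (n*k-ℓ) (n-3) * (Bblk k n ℓ J (n-3))ᴴ
        = EselLast k n ℓ * BblkLast k n ℓ J := by abel
    rw [e, Matrix.mul_assoc, ← Matrix.mul_assoc (BblkLast k n ℓ J),
      Matrix.mul_nonsing_inv _ hu, Matrix.mul_one]
end
end

section
/- Let J ∈ 𝒥_{k,N} with N = kn − ℓ, 0 ≤ ℓ < k, with orthonormal eigenpairs J v̂_j = λ_j v̂_j and v_j = E_1^* v̂_j ∈ ℂ^k. For d ≥ 0 let 𝒩_d be the ℂ-subspace of ℂ^k-valued polynomials p of degree at most d satisfying Σ_{j=1}^N |v_j^* p(λ_j)|^2 = 0. Then dim 𝒩_d = 0 for every d < n − 1, and dim 𝒩_{n−1} = ℓ. -/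
/-!
Write `E = E_1` and `K_m = [E, J E, …, J ^ (m - 1) E]`. Since `v̂_j^* J ^ t = λ_j ^ t v̂_j^*`, a
polynomial vector `p` of degree `< m` with coefficient vector `c` satisfies
`v_j^* p(λ_j) = v̂_j^* K_m c`; as the `v̂_j` are an orthonormal basis, `p ∈ 𝒩_d` iff `K_m c = 0`.

Because `J` is block tridiagonal, `J ^ t E` vanishes below block `t`, and its block `t` is
`B_{t-1} ⋯ B_0`: upper triangular with nonzero diagonal for `t ≤ n - 2`, and in row echelon form
for `t = n - 1`. Hence for `i < (n - 1) k` the first nonzero entry of row `i` of `K_{n-1}` lies in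
column `i`, so `K_{n-1}` is injective and `𝒩_d = 0` for `d < n - 1`; and every row of `K_n` holds
the lowest nonzero entry of some column, so `K_n` has rank `N` and
`dim 𝒩_{n-1} = dim ker K_n = nk - N = ℓ`.
-/

open Matrix Polynomial

noncomputable section

/-- The set `𝒩_d` of `ℂ^k`-valued polynomials `p` of degree at most `d` with
`Σ_j |v_j^* p(λ_j)|² = 0`. -/
def NcalSet (k N : ℕ) (d : ℕ) (lam : Fin N → ℝ) (v : Fin N → Fin k → ℂ) :
    Set (Fin k → Polynomial ℂ) :=
  {p | (∀ a, (p a).degree ≤ (d : ℕ)) ∧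
      ∑ j, Complex.normSq (∑ a, star (v j a) * (p a).eval ((lam j : ℂ))) = 0}

section Pivots

variable {R ι κ : Type*} [CommSemiring R]

def HasPivotsAt [LT κ] (A : Matrix ι κ R) (p : ι → κ) : Prop :=
  ∀ i, A i (p i) ≠ 0 ∧ ∀ j, j < p i → A i j = 0

theorem HasPivotsAt.one [Nontrivial R] [LinearOrder κ] [DecidableEq κ] :
    HasPivotsAt (1 : Matrix κ κ R) id :=
  fun i => ⟨by rw [id, one_apply_eq]; exact one_ne_zero, fun _ hj => one_apply_ne hj.ne'⟩

theorem HasPivotsAt.mul [NoZeroDivisors R] [Fintype κ] [LinearOrder κ] {A : Matrix ι κ R}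
    {B : Matrix κ κ R} {p : ι → κ} (hA : HasPivotsAt A p) (hB : HasPivotsAt B id) :
    HasPivotsAt (A * B) p := by
  intro i
  have hleft : ∀ j s, s < p i → A i s * B s j = 0 := fun j s hs => by
    rw [(hA i).2 s hs, zero_mul]
  refine ⟨?_, fun j hj => (mul_apply ..).trans (Finset.sum_eq_zero fun s _ => ?_)⟩
  · rw [mul_apply, Finset.sum_eq_single (p i)]
    · exact mul_ne_zero (hA i).1 (hB (p i)).1
    · intro s _ hs
      rcases hs.lt_or_gt with h | h
      · exact hleft _ s h
      · rw [(hB s).2 (p i) h, mul_zero]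
    · simp
  · rcases lt_or_ge s (p i) with h | h
    · exact hleft j s h
    · rw [(hB s).2 j (hj.trans_le h), mul_zero]

theorem Matrix.eq_zero_of_vecMul_eq_zero_of_lowest_nonzero [NoZeroDivisors R] [Fintype ι]
    [LinearOrder ι] {A : Matrix ι κ R} (hA : ∀ i, ∃ j, A i j ≠ 0 ∧ ∀ s, i < s → A s j = 0)
    {u : ι → R} (hu : u ᵥ* A = 0) : u = 0 := by
  funext i
  induction i using WellFoundedLT.induction with
  | _ i ih =>
    obtain ⟨j, hij, hbelow⟩ := hA i
    have hcol := congrFun hu j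
    rw [vecMul, dotProduct, Finset.sum_eq_single i] at hcol
    · exact (mul_eq_zero.mp hcol).resolve_right hij
    · intro s _ hs
      rcases hs.lt_or_gt with h | h
      · rw [ih s h, Pi.zero_apply, zero_mul]
      · rw [hbelow s h, mul_zero]
    · simp

theorem Matrix.eq_zero_of_mulVec_eq_zero_of_leftmost_nonzero [NoZeroDivisors R] [Fintype ι]
    [Fintype κ] [LinearOrder κ] {A : Matrix ι κ R}
    (hA : ∀ j, ∃ i, A i j ≠ 0 ∧ ∀ s, s < j → A i s = 0)
    {x : κ → R} (hx : A *ᵥ x = 0) : x = 0 :=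
  Matrix.eq_zero_of_vecMul_eq_zero_of_lowest_nonzero (ι := κᵒᵈ) (A := Aᵀ)
    (fun j => hA (OrderDual.ofDual j)) (u := x) ((vecMul_transpose A x).trans hx)

end Pivots

theorem UpperTriPosDiag.hasPivotsAt {k : ℕ} {M : Matrix (Fin k) (Fin k) ℂ}
    (h : UpperTriPosDiag M) : HasPivotsAt M id :=
  fun i => ⟨Complex.ne_zero_of_re_pos ((h i i).2 rfl).1, fun j hj => (h i j).1 hj⟩

theorem RowEchelonPosPivots.exists_hasPivotsAt {r m : ℕ} {M : Matrix (Fin r) (Fin m) ℂ}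
    (h : RowEchelonPosPivots M) : ∃ p, StrictMono p ∧ HasPivotsAt M p := by
  obtain ⟨p, hp, hpiv⟩ := h
  exact ⟨p, hp, fun i => ⟨Complex.ne_zero_of_re_pos (hpiv i).1.1, (hpiv i).2⟩⟩

theorem Nat.mod_lt_mod_of_lt_of_div_eq {a b k : ℕ} (hab : a < b) (h : a / k = b / k) :
    a % k < b % k := by
  have ha := Nat.div_add_mod' a k
  have hb := Nat.div_add_mod' b k
  rw [h] at ha
  omega

theorem Nat.mul_add_div_of_lt {k t a : ℕ} (ha : a < k) : (t * k + a) / k = t := by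
  rw [Nat.add_comm, Nat.add_mul_div_right _ _ (by omega), Nat.div_eq_of_lt ha, zero_add]

theorem mul_add_lt_mul_sub {k n ℓ t a : ℕ} (hℓ : ℓ < k) (ht : t + 2 ≤ n) (ha : a < k) :
    t * k + a < n * k - ℓ := by
  have := Nat.mul_le_mul_right k ht
  rw [add_mul] at this
  omega

theorem le_mul_sub_of_lt {k n ℓ : ℕ} (hℓ : ℓ < k) (hn : 2 ≤ n) : k ≤ n * k - ℓ := by
  have := Nat.mul_le_mul_right k hn
  omega

theorem div_lt_of_lt_mul_sub {k n ℓ : ℕ} (i : Fin (n * k - ℓ)) : (i : ℕ) / k < n :=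
  Nat.div_lt_of_lt_mul (lt_of_lt_of_le i.isLt (by rw [Nat.mul_comm]; omega))

theorem sub_one_mul_add_lt_mul_sub {k n ℓ a : ℕ} (hn : 1 ≤ n) (ha : a < k - ℓ) :
    (n - 1) * k + a < n * k - ℓ := by
  have := Nat.le_mul_of_pos_left k hn
  rw [Nat.sub_one_mul]
  omega

theorem mod_lt_of_div_eq_last {k n ℓ : ℕ} (hn : 1 ≤ n) {i : Fin (n * k - ℓ)}
    (hi : (i : ℕ) / k = n - 1) :
    (i : ℕ) % k < k - ℓ := by
  have h1 := Nat.div_add_mod' i k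
  have h2 := Nat.le_mul_of_pos_left k hn
  rw [hi, Nat.sub_one_mul] at h1
  omega

section Selector

variable {N : ℕ}

def selector (N : ℕ) {r : ℕ} (g : Fin r → ℕ) : Matrix (Fin N) (Fin r) ℂ :=
  of fun i a => if (i : ℕ) = g a then 1 else 0

theorem Esel_eq_selector (k N b : ℕ) : Esel k N b = selector N fun a : Fin k => b * k + a := rfl

theorem EselLast_eq_selector (k n ℓ : ℕ) :
    EselLast k n ℓ = selector (n * k - ℓ) fun a : Fin (k - ℓ) => (n - 1) * k + a := rfl

theorem mul_selector_apply {r s : ℕ} (M : Matrix (Fin r) (Fin N) ℂ) {g : Fin s → ℕ}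
    (hg : ∀ a, g a < N) (i : Fin r) (a : Fin s) :
    (M * selector N g) i a = M i ⟨g a, hg a⟩ := by
  rw [mul_apply, Finset.sum_eq_single ⟨g a, hg a⟩]
  · simp [selector]
  · intro j _ hj
    simp [selector, Fin.val_ne_iff.mpr hj]
  · simp

theorem conjTranspose_selector_mul_apply {r s : ℕ} (M : Matrix (Fin N) (Fin r) ℂ)
    {g : Fin s → ℕ} (hg : ∀ a, g a < N) (a : Fin s) (i : Fin r) :
    ((selector N g)ᴴ * M) a i = M ⟨g a, hg a⟩ i := by
  rw [mul_apply, Finset.sum_eq_single ⟨g a, hg a⟩]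
  · simp [selector]
  · intro j _ hj
    simp [selector, Fin.val_ne_iff.mpr hj]
  · simp

end Selector

section BlockTridiagonal

variable {R : Type*} [Semiring R] {N k : ℕ}

def IsBlockTridiagonal (k : ℕ) (J : Matrix (Fin N) (Fin N) R) : Prop :=
  ∀ i j : Fin N, ((i : ℕ) / k + 2 ≤ (j : ℕ) / k ∨ (j : ℕ) / k + 2 ≤ (i : ℕ) / k) → J i j = 0

theorem IsBlockTridiagonal.pow_apply_eq_zero {J : Matrix (Fin N) (Fin N) R}
    (hJ : IsBlockTridiagonal k J) (m : ℕ) {i j : Fin N} (h : (j : ℕ) / k + m < (i : ℕ) / k) :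
    (J ^ m) i j = 0 := by
  induction m generalizing i with
  | zero => exact one_apply_ne (by rintro rfl; omega)
  | succ m ih =>
    rw [pow_succ', mul_apply]
    refine Finset.sum_eq_zero fun s _ => ?_
    rcases lt_or_ge ((j : ℕ) / k + m) ((s : ℕ) / k) with hs | hs
    · rw [ih hs, mul_zero]
    · rw [hJ i s (Or.inr (by omega)), zero_mul]

theorem IsBlockTridiagonal.conjTranspose_selector_mul_pow_succ {J : Matrix (Fin N) (Fin N) ℂ}
    (hJ : IsBlockTridiagonal k J) {r t : ℕ} {g : Fin r → ℕ} (hg : ∀ a, g a < N)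
    (hgt : ∀ a, g a / k = t + 1) :
    (selector N g)ᴴ * J ^ (t + 1) * Esel k N 0 =
      ((selector N g)ᴴ * J * Esel k N t) * ((Esel k N t)ᴴ * J ^ t * Esel k N 0) := by
  ext a c
  have hk : 0 < k := Nat.pos_of_ne_zero fun h => by simpa [h] using hgt a
  have hN : t * k + k ≤ N := by
    have := Nat.div_mul_le_self (g a) k
    rw [hgt a, add_mul, one_mul] at this
    linarith [hg a]
  have hEt : ∀ s : Fin k, t * k + s < N := fun s => by omega
  have hE0 : ∀ s : Fin k, 0 * k + s < N := fun s => by omega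
  rw [Esel_eq_selector, Esel_eq_selector, mul_selector_apply _ hE0,
    conjTranspose_selector_mul_apply _ hg, mul_apply]
  simp only [mul_selector_apply _ hEt, mul_selector_apply _ hE0,
    conjTranspose_selector_mul_apply _ hg, conjTranspose_selector_mul_apply _ hEt]
  rw [pow_succ', mul_apply]
  symm
  refine Fintype.sum_of_injective (fun s : Fin k => (⟨t * k + s, hEt s⟩ : Fin N))
    (fun s s' h => Fin.ext (by simpa using h)) _ _ (fun x hx => ?_) fun _ => rfl
  -- Row `g a` of `J` vanishes outside blocks `t, t + 1, t + 2`, and column `c` of `J ^ t` below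
  -- block `t`, so only the indices `x` of block `t` contribute.
  rcases lt_trichotomy ((x : ℕ) / k) t with h | h | h
  · rw [hJ _ x (Or.inr (by rw [hgt a]; omega)), zero_mul]
  · refine absurd ⟨⟨x % k, Nat.mod_lt _ hk⟩, Fin.ext ?_⟩ hx
    simpa [← h] using Nat.div_add_mod' x k
  · rw [hJ.pow_apply_eq_zero t (by simp [Nat.div_eq_of_lt c.isLt]; omega), mul_zero]

end BlockTridiagonal

/-- The block Krylov matrix `[E, J E, …, J ^ (m - 1) E]`. -/
def krylovMatrix {R ι : Type*} [CommSemiring R] [Fintype ι] [DecidableEq ι] {k : ℕ}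
    (J : Matrix ι ι R) (E : Matrix ι (Fin k) R) (m : ℕ) : Matrix ι (Fin (m * k)) R :=
  of fun i j => (J ^ (j.divNat : ℕ) * E) i j.modNat

section KrylovEntries

variable {N k m : ℕ} {J : Matrix (Fin N) (Fin N) ℂ}

theorem IsBlockTridiagonal.krylovMatrix_apply_eq_zero (hJ : IsBlockTridiagonal k J)
    (hk : k ≤ N) {i : Fin N} {j : Fin (m * k)} (h : (j.divNat : ℕ) < i / k) :
    krylovMatrix J (Esel k N 0) m i j = 0 := by
  rw [krylovMatrix, of_apply, Esel_eq_selector, mul_selector_apply _ fun a => by omega]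
  exact hJ.pow_apply_eq_zero _ (by simpa [Nat.div_eq_of_lt j.modNat.isLt] using h)

theorem krylovMatrix_apply_eq_selector {r : ℕ} {g : Fin r → ℕ} (hg : ∀ a, g a < N)
    (hk : k ≤ N) {i : Fin N} {a : Fin r} (hi : g a = i) (j : Fin (m * k)) :
    krylovMatrix J (Esel k N 0) m i j =
      ((selector N g)ᴴ * J ^ (j.divNat : ℕ) * Esel k N 0) a j.modNat := by
  have hE0 : ∀ b : Fin k, 0 * k + b < N := fun b => by omega
  rw [krylovMatrix, of_apply, Esel_eq_selector, mul_selector_apply _ hE0,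
    mul_selector_apply _ hE0, conjTranspose_selector_mul_apply _ hg,
    show (⟨g a, hg a⟩ : Fin N) = i from Fin.ext hi]

end KrylovEntries

section JkN

variable {k n ℓ m : ℕ} {J : Matrix (Fin (n * k - ℓ)) (Fin (n * k - ℓ)) ℂ}

theorem IsJkN.isBlockTridiagonal (hJ : IsJkN k n ℓ J) : IsBlockTridiagonal k J :=
  hJ.2.1

theorem IsJkN.krylovBlock_hasPivotsAt (hJ : IsJkN k n ℓ J) (hℓ : ℓ < k) :
    ∀ t, t + 2 ≤ n →
      HasPivotsAt ((Esel k (n * k - ℓ) t)ᴴ * J ^ t * Esel k (n * k - ℓ) 0) id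
  | 0, hn => by
    have hE0 : ∀ a : Fin k, 0 * k + a < n * k - ℓ := fun a => mul_add_lt_mul_sub hℓ hn a.isLt
    have : (Esel k (n * k - ℓ) 0)ᴴ * J ^ 0 * Esel k (n * k - ℓ) 0 = 1 := by
      ext a b
      rw [Esel_eq_selector, mul_selector_apply _ hE0, conjTranspose_selector_mul_apply _ hE0]
      simp [one_apply, Fin.ext_iff]
    rw [this]
    exact HasPivotsAt.one
  | t + 1, hn => by
    rw [Esel_eq_selector k _ (t + 1), hJ.isBlockTridiagonal.conjTranspose_selector_mul_pow_succ
      (fun a => mul_add_lt_mul_sub hℓ hn a.isLt) (fun a => Nat.mul_add_div_of_lt a.isLt)]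
    exact (hJ.2.2.1 t hn).hasPivotsAt.mul (hJ.krylovBlock_hasPivotsAt hℓ t (by omega))

theorem IsJkN.krylovLastBlock_exists_hasPivotsAt (hJ : IsJkN k n ℓ J) (hn : 2 ≤ n) (hℓ : ℓ < k) :
    ∃ p, StrictMono p ∧
      HasPivotsAt ((EselLast k n ℓ)ᴴ * J ^ (n - 1) * Esel k (n * k - ℓ) 0) p := by
  obtain ⟨p, hp, hpiv⟩ := hJ.2.2.2.exists_hasPivotsAt
  refine ⟨p, hp, ?_⟩
  have hn1 : n - 1 = n - 2 + 1 := by omega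
  rw [hn1, EselLast_eq_selector, hJ.isBlockTridiagonal.conjTranspose_selector_mul_pow_succ
    (fun a => sub_one_mul_add_lt_mul_sub (by omega) a.isLt)
    (fun a => by rw [← hn1]; exact Nat.mul_add_div_of_lt (by omega))]
  exact hpiv.mul (hJ.krylovBlock_hasPivotsAt hℓ (n - 2) (by omega))

theorem krylovMatrix_apply_of_div_eq (hℓ : ℓ < k) {t : ℕ} (ht : t + 2 ≤ n)
    {i : Fin (n * k - ℓ)} {j : Fin (m * k)} (hi : (i : ℕ) / k = t) (hj : (j.divNat : ℕ) = t) :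
    krylovMatrix J (Esel k (n * k - ℓ) 0) m i j =
      ((Esel k (n * k - ℓ) t)ᴴ * J ^ t * Esel k (n * k - ℓ) 0) ⟨i % k, Nat.mod_lt _ (by omega)⟩
        j.modNat := by
  rw [krylovMatrix_apply_eq_selector (fun a => mul_add_lt_mul_sub hℓ ht a.isLt)
    (le_mul_sub_of_lt hℓ (by omega)) (a := ⟨i % k, _⟩) (by rw [← hi]; exact Nat.div_add_mod' i k),
    hj]
  rfl

theorem krylovMatrix_apply_of_div_eq_last (hn : 2 ≤ n) (hℓ : ℓ < k) {i : Fin (n * k - ℓ)}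
    {j : Fin (m * k)} (hi : (i : ℕ) / k = n - 1) (hj : (j.divNat : ℕ) = n - 1) :
    krylovMatrix J (Esel k (n * k - ℓ) 0) m i j =
      ((EselLast k n ℓ)ᴴ * J ^ (n - 1) * Esel k (n * k - ℓ) 0)
        ⟨i % k, mod_lt_of_div_eq_last (by omega) hi⟩ j.modNat := by
  rw [krylovMatrix_apply_eq_selector (fun a => sub_one_mul_add_lt_mul_sub (by omega) a.isLt)
    (le_mul_sub_of_lt hℓ hn) (a := ⟨i % k, _⟩) (by rw [← hi]; exact Nat.div_add_mod' i k), hj]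
  rfl

theorem IsJkN.krylovMatrix_exists_lowest_nonzero_interior (hJ : IsJkN k n ℓ J) (hℓ : ℓ < k)
    {i : Fin (n * k - ℓ)} (ht : (i : ℕ) / k + 2 ≤ n) :
    ∃ j, krylovMatrix J (Esel k (n * k - ℓ) 0) n i j ≠ 0 ∧
      ∀ s, i < s → krylovMatrix J (Esel k (n * k - ℓ) 0) n s j = 0 := by
  have hpiv := hJ.krylovBlock_hasPivotsAt hℓ _ ht
  refine ⟨⟨i, by omega⟩, ?_, fun s hs => ?_⟩
  · rw [krylovMatrix_apply_of_div_eq hℓ ht rfl rfl]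
    exact (hpiv _).1
  · rcases (Nat.div_le_div_right (c := k) hs.le).lt_or_eq with h | h
    · exact hJ.isBlockTridiagonal.krylovMatrix_apply_eq_zero
        (le_mul_sub_of_lt hℓ ((Nat.le_add_left 2 _).trans ht)) h
    · rw [krylovMatrix_apply_of_div_eq hℓ ht h.symm rfl]
      exact (hpiv _).2 _ (Nat.mod_lt_mod_of_lt_of_div_eq hs h)

theorem IsJkN.krylovMatrix_exists_lowest_nonzero_last (hJ : IsJkN k n ℓ J) (hn : 2 ≤ n)
    (hℓ : ℓ < k) {i : Fin (n * k - ℓ)} (ht : (i : ℕ) / k = n - 1) :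
    ∃ j, krylovMatrix J (Esel k (n * k - ℓ) 0) n i j ≠ 0 ∧
      ∀ s, i < s → krylovMatrix J (Esel k (n * k - ℓ) 0) n s j = 0 := by
  obtain ⟨p, hp, hpiv⟩ := hJ.krylovLastBlock_exists_hasPivotsAt hn hℓ
  set r : Fin (k - ℓ) := ⟨i % k, mod_lt_of_div_eq_last (by omega) ht⟩
  have hj : (n - 1) * k + p r < n * k := by
    have := Nat.le_mul_of_pos_left k (by omega : 0 < n)
    have := (p r).isLt
    rw [Nat.sub_one_mul]
    omega
  have hjdiv : ((⟨_, hj⟩ : Fin (n * k)).divNat : ℕ) = n - 1 := Nat.mul_add_div_of_lt (p r).isLt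
  have hjmod : (⟨_, hj⟩ : Fin (n * k)).modNat = p r := Fin.ext (Nat.mul_add_mod_of_lt (p r).isLt)
  refine ⟨⟨_, hj⟩, ?_, fun s hs => ?_⟩
  · rw [krylovMatrix_apply_of_div_eq_last hn hℓ ht hjdiv, hjmod]
    exact (hpiv r).1
  · have hs' : (s : ℕ) / k = n - 1 :=
      le_antisymm (by have := div_lt_of_lt_mul_sub s; omega) (ht ▸ Nat.div_le_div_right hs.le)
    rw [krylovMatrix_apply_of_div_eq_last hn hℓ hs' hjdiv, hjmod]
    exact (hpiv _).2 _ (hp (Nat.mod_lt_mod_of_lt_of_div_eq hs (ht.trans hs'.symm)))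

theorem IsJkN.rank_krylovMatrix (hJ : IsJkN k n ℓ J) (hn : 2 ≤ n) (hℓ : ℓ < k) :
    (krylovMatrix J (Esel k (n * k - ℓ) 0) n).rank = n * k - ℓ := by
  have hrows : ∀ i, ∃ j, krylovMatrix J (Esel k (n * k - ℓ) 0) n i j ≠ 0 ∧
      ∀ s, i < s → krylovMatrix J (Esel k (n * k - ℓ) 0) n s j = 0 := fun i => by
    have := div_lt_of_lt_mul_sub i
    rcases Nat.lt_or_ge ((i : ℕ) / k + 1) n with ht | ht
    · exact hJ.krylovMatrix_exists_lowest_nonzero_interior hℓ ht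
    · exact hJ.krylovMatrix_exists_lowest_nonzero_last hn hℓ (by omega)
  rw [← rank_transpose, rank, LinearMap.finrank_range_of_inj, Module.finrank_fin_fun]
  intro u v huv
  rw [← sub_eq_zero]
  refine eq_zero_of_vecMul_eq_zero_of_lowest_nonzero hrows ?_
  rw [sub_vecMul, ← mulVec_transpose, ← mulVec_transpose]
  exact sub_eq_zero.mpr huv

theorem IsJkN.eq_zero_of_krylovMatrix_mulVec_eq_zero (hJ : IsJkN k n ℓ J) (hℓ : ℓ < k)
    (hm : m + 1 ≤ n) {x : Fin (m * k) → ℂ}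
    (hx : krylovMatrix J (Esel k (n * k - ℓ) 0) m *ᵥ x = 0) : x = 0 := by
  refine eq_zero_of_mulVec_eq_zero_of_leftmost_nonzero (fun j => ?_) hx
  have ht : (j.divNat : ℕ) + 2 ≤ n := by have := j.divNat.isLt; omega
  have hpiv := hJ.krylovBlock_hasPivotsAt hℓ _ ht
  have hi : (j : ℕ) < n * k - ℓ := by
    have h := Nat.mul_le_mul_right k hm
    rw [add_mul] at h
    omega
  refine ⟨⟨j, hi⟩, ?_, fun s hs => ?_⟩
  · rw [krylovMatrix_apply_of_div_eq hℓ ht rfl rfl]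
    exact (hpiv _).1
  · rcases (Nat.div_le_div_right (c := k) hs.le).lt_or_eq with h | h
    · exact hJ.isBlockTridiagonal.krylovMatrix_apply_eq_zero
        (le_mul_sub_of_lt hℓ ((Nat.le_add_left 2 _).trans ht)) h
    · rw [krylovMatrix_apply_of_div_eq hℓ ht rfl h]
      exact (hpiv _).2 _ (Nat.mod_lt_mod_of_lt_of_div_eq hs h)

end JkN

section Coefficients

variable {R : Type*} [CommSemiring R] {k : ℕ}

/-- The coefficients of degree `< m` of `p : Fin k → R[X]`, in the column order of
`krylovMatrix`. -/
def coeffVec (m : ℕ) : (Fin k → R[X]) →ₗ[R] (Fin (m * k) → R) :=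
  LinearMap.pi fun j => lcoeff R j.divNat ∘ₗ LinearMap.proj j.modNat

def polyOfCoeffs (m : ℕ) : (Fin (m * k) → R) →ₗ[R] (Fin k → R[X]) :=
  LinearMap.pi fun a => ∑ t : Fin m, monomial t ∘ₗ LinearMap.proj (finProdFinEquiv (t, a))

theorem divNat_finProdFinEquiv {m : ℕ} (x : Fin m × Fin k) : (finProdFinEquiv x).divNat = x.1 :=
  congrArg Prod.fst ((finProdFinEquiv_symm_apply _).symm.trans (finProdFinEquiv.symm_apply_apply x))

theorem modNat_finProdFinEquiv {m : ℕ} (x : Fin m × Fin k) : (finProdFinEquiv x).modNat = x.2 :=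
  congrArg Prod.snd ((finProdFinEquiv_symm_apply _).symm.trans (finProdFinEquiv.symm_apply_apply x))

theorem coeffVec_apply (m : ℕ) (p : Fin k → R[X]) (j : Fin (m * k)) :
    coeffVec m p j = (p j.modNat).coeff j.divNat :=
  rfl

theorem polyOfCoeffs_apply (m : ℕ) (c : Fin (m * k) → R) (a : Fin k) :
    polyOfCoeffs m c a = ∑ t : Fin m, monomial t (c (finProdFinEquiv (t, a))) := by
  simp [polyOfCoeffs]

theorem coeffVec_polyOfCoeffs (m : ℕ) (c : Fin (m * k) → R) :
    coeffVec m (polyOfCoeffs m c) = c := by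
  funext j
  rw [coeffVec_apply, polyOfCoeffs_apply, finsetSum_coeff, Finset.sum_eq_single j.divNat]
  · rw [coeff_monomial, if_pos rfl, ← finProdFinEquiv_symm_apply, Equiv.apply_symm_apply]
  · intro t _ ht
    rw [coeff_monomial, if_neg (Fin.val_ne_iff.mpr ht)]
  · simp

theorem polyOfCoeffs_injective (m : ℕ) : Function.Injective (polyOfCoeffs (R := R) (k := k) m) :=
  Function.LeftInverse.injective (coeffVec_polyOfCoeffs m)

theorem polyOfCoeffs_coeffVec {m : ℕ} {p : Fin k → R[X]} (hp : ∀ a, (p a).natDegree < m) :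
    polyOfCoeffs m (coeffVec m p) = p := by
  funext a
  rw [polyOfCoeffs_apply, as_sum_range' (p a) m (hp a), ← Fin.sum_univ_eq_sum_range]
  simp only [coeffVec_apply, divNat_finProdFinEquiv, modNat_finProdFinEquiv]

theorem natDegree_polyOfCoeffs_le (m : ℕ) (c : Fin (m * k) → R) (a : Fin k) :
    (polyOfCoeffs m c a).natDegree ≤ m - 1 := by
  rw [polyOfCoeffs_apply]
  exact natDegree_sum_le_of_forall_le _ _ fun t _ =>
    (natDegree_monomial_le _).trans (by have := t.isLt; omega)

variable {ι : Type*} [Fintype ι] [DecidableEq ι]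

theorem dotProduct_krylovMatrix_mulVec_coeffVec {J : Matrix ι ι R} {E : Matrix ι (Fin k) R}
    {w : ι → R} {μ : R} (hw : w ᵥ* J = μ • w) {m : ℕ} {p : Fin k → R[X]}
    (hp : ∀ a, (p a).natDegree < m) :
    w ⬝ᵥ (krylovMatrix J E m *ᵥ coeffVec m p) = ∑ a, (w ᵥ* E) a * (p a).eval μ := by
  have hpow : ∀ t : ℕ, w ᵥ* J ^ t = μ ^ t • w := fun t => by
    induction t with
    | zero => simp
    | succ t ih => rw [pow_succ, ← vecMul_vecMul, ih, smul_vecMul, hw, smul_smul, pow_succ]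
  have hcol : ∀ j, (w ᵥ* krylovMatrix J E m) j = μ ^ (j.divNat : ℕ) * (w ᵥ* E) j.modNat :=
    fun j => by
      change (w ᵥ* (J ^ (j.divNat : ℕ) * E)) j.modNat = _
      rw [← vecMul_vecMul, hpow, smul_vecMul, Pi.smul_apply, smul_eq_mul]
  rw [dotProduct_mulVec, dotProduct]
  simp only [hcol, coeffVec_apply]
  rw [← finProdFinEquiv.sum_comp, Fintype.sum_prod_type, Finset.sum_comm]
  refine Finset.sum_congr rfl fun a _ => ?_
  rw [eval_eq_sum_range' (hp a), Finset.mul_sum, ← Fin.sum_univ_eq_sum_range]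
  simp only [divNat_finProdFinEquiv, modNat_finProdFinEquiv]
  exact Finset.sum_congr rfl fun t _ => by ring

end Coefficients

theorem Matrix.IsHermitian.star_vecMul_eq_of_mulVec_eq {𝕜 ι : Type*} [RCLike 𝕜] [Fintype ι]
    {J : Matrix ι ι 𝕜} (hJ : J.IsHermitian) {x : ι → 𝕜} {μ : ℝ} (h : J *ᵥ x = (μ : 𝕜) • x) :
    star x ᵥ* J = (μ : 𝕜) • star x := by
  conv_lhs => rw [← hJ.eq]
  rw [← star_mulVec, h, star_smul, RCLike.star_def, RCLike.conj_ofReal]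

theorem eq_zero_of_forall_star_dotProduct_eq_zero {R ι : Type*} [CommRing R] [StarRing R]
    [Fintype ι] [DecidableEq ι] {v : ι → ι → R}
    (horth : ∀ i j, ∑ a, star (v i a) * v j a = if i = j then 1 else 0) {y : ι → R}
    (h : ∀ j, star (v j) ⬝ᵥ y = 0) : y = 0 := by
  set V : Matrix ι ι R := of fun j a => star (v j a)
  have hV : V * Vᴴ = 1 := by
    ext i j
    simp [V, mul_apply, one_apply, horth]
  calc y = (Vᴴ * V) *ᵥ y := by rw [mul_eq_one_comm.mp hV, one_mulVec]
    _ = 0 := by rw [← mulVec_mulVec, show V *ᵥ y = 0 from funext h, mulVec_zero]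

theorem mem_NcalSet_iff {k N d m : ℕ} {J : Matrix (Fin N) (Fin N) ℂ} (hJ : J.IsHermitian)
    {lam : Fin N → ℝ} {vhat : Fin N → Fin N → ℂ}
    (heig : ∀ j, J *ᵥ vhat j = (lam j : ℂ) • vhat j)
    (horth : ∀ i j, ∑ a, star (vhat i a) * vhat j a = if i = j then 1 else 0)
    (E : Matrix (Fin N) (Fin k) ℂ) (hd : d < m) (p : Fin k → ℂ[X]) :
    p ∈ NcalSet k N d lam (fun j => Eᴴ *ᵥ vhat j) ↔
      (∀ a, (p a).natDegree ≤ d) ∧ krylovMatrix J E m *ᵥ coeffVec m p = 0 := by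
  simp only [NcalSet, Set.mem_ofPred_eq, ← natDegree_le_iff_degree_le]
  refine and_congr_right fun hdeg => ?_
  have hterm : ∀ j, ∑ a, star ((Eᴴ *ᵥ vhat j) a) * (p a).eval (lam j : ℂ) =
      star (vhat j) ⬝ᵥ (krylovMatrix J E m *ᵥ coeffVec m p) := fun j => by
    rw [dotProduct_krylovMatrix_mulVec_coeffVec (hJ.star_vecMul_eq_of_mulVec_eq (heig j))
      fun a => (hdeg a).trans_lt hd, ← conjTranspose_conjTranspose E, ← star_mulVec,
      conjTranspose_conjTranspose]
    rfl
  simp only [hterm, Finset.sum_eq_zero_iff_of_nonneg (fun _ _ => Complex.normSq_nonneg _),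
    Finset.mem_univ, true_implies, map_eq_zero]
  exact ⟨eq_zero_of_forall_star_dotProduct_eq_zero horth, fun h j => by rw [h, dotProduct_zero]⟩

theorem null_space_dimension_general
    (k n ℓ : ℕ) (hn : 2 ≤ n) (hℓ : ℓ < k)
    (J : Matrix (Fin (n * k - ℓ)) (Fin (n * k - ℓ)) ℂ) (hJ : IsJkN k n ℓ J)
    (lam : Fin (n * k - ℓ) → ℝ) (vhat : Fin (n * k - ℓ) → (Fin (n * k - ℓ) → ℂ))
    (heig : ∀ j, J.mulVec (vhat j) = (lam j : ℂ) • vhat j)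
    (horth : ∀ i j, ∑ a, star (vhat i a) * vhat j a = if i = j then 1 else 0) :
    (∀ d : ℕ, d + 1 < n →
        NcalSet k (n * k - ℓ) d lam
          (fun j => (Esel k (n * k - ℓ) 0)ᴴ.mulVec (vhat j)) = {0}) ∧
    (∃ S : Submodule ℂ (Fin k → Polynomial ℂ),
        (S : Set (Fin k → Polynomial ℂ)) =
            NcalSet k (n * k - ℓ) (n - 1) lam
              (fun j => (Esel k (n * k - ℓ) 0)ᴴ.mulVec (vhat j)) ∧
        Module.finrank ℂ S = ℓ) := by
  refine ⟨fun d hd => Set.eq_singleton_iff_unique_mem.mpr ⟨?_, fun p hp => ?_⟩, ?_⟩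
  · exact (mem_NcalSet_iff hJ.1 heig horth _ d.lt_succ_self 0).mpr ⟨by simp, by simp⟩
  · obtain ⟨hdeg, hK⟩ := (mem_NcalSet_iff hJ.1 heig horth _ d.lt_succ_self p).mp hp
    rw [← polyOfCoeffs_coeffVec fun a => Nat.lt_succ_of_le (hdeg a),
      hJ.eq_zero_of_krylovMatrix_mulVec_eq_zero hℓ hd hK, map_zero]
  set K := krylovMatrix J (Esel k (n * k - ℓ) 0) n
  refine ⟨(LinearMap.ker K.mulVecLin).map (polyOfCoeffs n), Set.ext fun p => ?_, ?_⟩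
  · rw [SetLike.mem_coe, Submodule.mem_map,
      mem_NcalSet_iff hJ.1 heig horth _ (by omega : n - 1 < n)]
    constructor
    · rintro ⟨c, hc, rfl⟩
      exact ⟨natDegree_polyOfCoeffs_le n c, by rwa [coeffVec_polyOfCoeffs]⟩
    · rintro ⟨hdeg, hK⟩
      exact ⟨coeffVec n p, hK, polyOfCoeffs_coeffVec fun a => by have := hdeg a; omega⟩
  · have := LinearMap.finrank_range_add_finrank_ker K.mulVecLin
    rw [← rank, hJ.rank_krylovMatrix hn hℓ, Module.finrank_fin_fun] at this
    rw [(Submodule.equivMapOfInjective _ (polyOfCoeffs_injective n) _).finrank_eq.symm]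
    have := le_mul_sub_of_lt hℓ hn
    omega

/-- For `J ∈ 𝒥_{k,N}` with `N = kn - ℓ`, the null space `𝒩_d` of the
quasi-inner product induced by the spectral measure is trivial for `d < n-1` and has
dimension `ℓ` for `d = n-1`. -/
theorem null_space_dimension
    (k n ℓ : ℕ) (hk : 1 ≤ k) (hn : 2 ≤ n) (hℓ : ℓ < k)
    (J : Matrix (Fin (n * k - ℓ)) (Fin (n * k - ℓ)) ℂ) (hJ : IsJkN k n ℓ J)
    (lam : Fin (n * k - ℓ) → ℝ) (vhat : Fin (n * k - ℓ) → (Fin (n * k - ℓ) → ℂ))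
    (heig : ∀ j, J.mulVec (vhat j) = (lam j : ℂ) • vhat j)
    (horth : ∀ i j, ∑ a, star (vhat i a) * vhat j a = if i = j then 1 else 0) :
    (∀ d : ℕ, d + 1 < n →
        NcalSet k (n * k - ℓ) d lam
          (fun j => (Esel k (n * k - ℓ) 0)ᴴ.mulVec (vhat j)) = {0}) ∧
    (∃ S : Submodule ℂ (Fin k → Polynomial ℂ),
        (S : Set (Fin k → Polynomial ℂ)) =
            NcalSet k (n * k - ℓ) (n - 1) lam
              (fun j => (Esel k (n * k - ℓ) 0)ᴴ.mulVec (vhat j)) ∧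
        Module.finrank ℂ S = ℓ) :=
  null_space_dimension_general k n ℓ hn hℓ J hJ lam vhat heig horth
end
end

section
/- Let J ∈ 𝒥_{k,N} with N = kn − ℓ, 0 ≤ ℓ < k, and let μ = φ(J) be its spectral measure. Then the monic orthogonal polynomial Π_{n−1} of degree n−1 for μ exists and is unique, and rank ⟨Π_{n−1}, Π_{n−1}⟩_μ = k − ℓ. -/
open Matrix Polynomial

noncomputable section

/-- The quasi-inner product `⟨P,Q⟩_μ = Σ_j P(λ_j)^* v_j v_j^* Q(λ_j)` of matrix
polynomials with respect to the spectral measure. -/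
def innerPoly {k N : ℕ} (lam : Fin N → ℝ) (v : Fin N → Fin k → ℂ)
    (P Q : Polynomial (Matrix (Fin k) (Fin k) ℂ)) : Matrix (Fin k) (Fin k) ℂ :=
  ∑ j, (P.eval ((lam j : ℂ) • (1 : Matrix (Fin k) (Fin k) ℂ)))ᴴ *
      vecMulVec (v j) (star (v j)) *
      Q.eval ((lam j : ℂ) • (1 : Matrix (Fin k) (Fin k) ℂ))

/-!
Put `E = E₁` and `K(P) = ∑_{m<n} J^m E P_m` for a matrix polynomial `P` of degree `< n`. As `J` is
diagonalised by the orthonormal eigenbasis, `⟨P, Q⟩_μ = K(P)ᴴ K(Q)`. With the block Krylov matrix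
`A = [E, JE, …, J^{n-2}E]` and `T = J^{n-1}E`, a monic `P` of degree `n - 1` has `K(P) = T + A C`,
`C` its stacked lower coefficients, and `P` is orthogonal iff the normal equation
`Aᴴ (T + A C) = 0` holds.

Since `J` is block tridiagonal with surjective subdiagonal blocks `B_i`, `J^m E` vanishes below
block row `m` and maps onto block row `m`. Hence every vector vanishing from row `(n-1)k` on lies
in `range A`, so `A` has full column rank `(n-1)k`, and `range A + range T = ℂ^N`. The normal
equation therefore has exactly one solution, and `range (T + A C)`, a complement of `range A`, has
dimension `N - (n-1)k = k - ℓ`.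
-/

namespace Matrix

section RCLike

open scoped ComplexOrder

variable {𝕜 : Type*} [RCLike 𝕜] {m p q : Type*} [Fintype m] [Fintype p]

theorem existsUnique_conjTranspose_mul_add_mul_eq_zero [DecidableEq p] {A : Matrix m p 𝕜}
    (hA : Function.Injective A.mulVec) (T : Matrix m q 𝕜) :
    ∃! C : Matrix p q 𝕜, Aᴴ * (T + A * C) = 0 := by
  have hG : IsUnit (Aᴴ * A).det := by
    rw [← isUnit_iff_isUnit_det, ← mulVec_injective_iff_isUnit]
    intro x y hxy
    rw [← sub_eq_zero, ← mulVec_sub, conjTranspose_mul_self_mulVec_eq_zero, mulVec_sub,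
      sub_eq_zero] at hxy
    exact hA hxy
  have normal_eq (C : Matrix p q 𝕜) : Aᴴ * (T + A * C) = Aᴴ * T + (Aᴴ * A) * C := by
    rw [Matrix.mul_add, Matrix.mul_assoc]
  refine ⟨-((Aᴴ * A)⁻¹ * (Aᴴ * T)), ?_, fun C (hC : Aᴴ * (T + A * C) = 0) => ?_⟩
  · change Aᴴ * (T + A * _) = 0
    rw [normal_eq, Matrix.mul_neg, mul_nonsing_inv_cancel_left (h := hG), add_neg_cancel]
  · rw [normal_eq] at hC
    rw [← Matrix.mul_neg, ← eq_neg_of_add_eq_zero_right hC, nonsing_inv_mul_cancel_left (h := hG)]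

theorem rank_add_mul_add_rank_eq_card [Fintype q] {A : Matrix m p 𝕜} {T : Matrix m q 𝕜}
    {C : Matrix p q 𝕜} (hspan : LinearMap.range A.mulVecLin ⊔ LinearMap.range T.mulVecLin = ⊤)
    (hC : Aᴴ * (T + A * C) = 0) : (T + A * C).rank + A.rank = Fintype.card m := by
  set K := T + A * C
  have hdisj : LinearMap.range A.mulVecLin ⊓ LinearMap.range K.mulVecLin = ⊥ := by
    rw [eq_bot_iff]
    rintro _ ⟨⟨x, rfl⟩, ⟨z, hz⟩⟩
    have : (Aᴴ * A) *ᵥ x = 0 := by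
      simp only [mulVecLin_apply] at hz
      rw [← mulVec_mulVec, ← hz, mulVec_mulVec, hC, zero_mulVec]
    exact (conjTranspose_mul_self_mulVec_eq_zero A x).1 this
  have hsup : LinearMap.range A.mulVecLin ⊔ LinearMap.range K.mulVecLin = ⊤ := by
    refine eq_top_iff.2 (hspan.symm.le.trans (sup_le le_sup_left ?_))
    rintro _ ⟨z, rfl⟩
    have hT : T *ᵥ z = A *ᵥ (-(C *ᵥ z)) + K *ᵥ z := by
      simp [K, add_mulVec, mulVec_neg, mulVec_mulVec]
    rw [mulVecLin_apply, hT]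
    exact Submodule.add_mem_sup (LinearMap.mem_range_self A.mulVecLin _)
      (LinearMap.mem_range_self K.mulVecLin _)
  have := Submodule.finrank_sup_add_finrank_inf_eq (LinearMap.range A.mulVecLin)
    (LinearMap.range K.mulVecLin)
  rw [hsup, hdisj, finrank_top, finrank_bot, Module.finrank_fintype_fun_eq_card] at this
  rw [rank, rank]
  omega

end RCLike

theorem mulVec_injective_of_card_le_rank {K : Type*} [Field K] {m p : Type*} [Fintype m]
    [Fintype p] {A : Matrix m p K} (h : Fintype.card p ≤ A.rank) : Function.Injective A.mulVec := by
  have := LinearMap.finrank_range_add_finrank_ker A.mulVecLin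
  rw [Module.finrank_fintype_fun_eq_card] at this
  have hker : Module.finrank K (LinearMap.ker A.mulVecLin) = 0 := by rw [rank] at h; omega
  exact LinearMap.ker_eq_bot.1 (Submodule.finrank_eq_zero.1 hker)

end Matrix

section BlockCoeffs

variable {R : Type*} [CommRing R] {κ : Type*} [Fintype κ] [DecidableEq κ] {t : ℕ}

def blockCoeffs (t : ℕ) (P : (Matrix κ κ R)[X]) : Matrix (Fin t × κ) κ R :=
  of fun ia b => P.coeff ia.1 ia.2 b

def ofBlockCoeffs (D : Matrix (Fin t × κ) κ R) : (Matrix κ κ R)[X] :=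
  ∑ i : Fin t, C (of fun a b => D (i, a) b) * X ^ (i : ℕ)

lemma degree_ofBlockCoeffs_lt (D : Matrix (Fin t × κ) κ R) : (ofBlockCoeffs D).degree < t :=
  degree_sum_fin_lt _

lemma natDegree_ofBlockCoeffs_lt (ht : 0 < t) (D : Matrix (Fin t × κ) κ R) :
    (ofBlockCoeffs D).natDegree < t := by
  by_cases h : ofBlockCoeffs D = 0
  · rwa [h, natDegree_zero]
  · exact (natDegree_lt_iff_degree_lt h).2 (degree_ofBlockCoeffs_lt D)

lemma blockCoeffs_ofBlockCoeffs (D : Matrix (Fin t × κ) κ R) :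
    blockCoeffs t (ofBlockCoeffs D) = D := by
  ext ⟨i, a⟩ b
  simp [blockCoeffs, ofBlockCoeffs, Fin.val_inj]

lemma blockCoeffs_X_pow_add (P : (Matrix κ κ R)[X]) :
    blockCoeffs t (X ^ t + P) = blockCoeffs t P := by
  ext ⟨i, a⟩ b
  simp [blockCoeffs, coeff_X_pow, i.isLt.ne]

lemma natDegree_X_pow_add_ofBlockCoeffs [Nonempty κ] [Nontrivial R]
    (D : Matrix (Fin t × κ) κ R) : (X ^ t + ofBlockCoeffs D).natDegree = t := by
  rw [natDegree_add_eq_left_of_degree_lt, natDegree_X_pow]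
  rw [degree_X_pow]
  exact degree_ofBlockCoeffs_lt D

lemma Polynomial.Monic.eq_X_pow_add_ofBlockCoeffs {P : (Matrix κ κ R)[X]} (hP : P.Monic)
    (h : P.natDegree = t) : P = X ^ t + ofBlockCoeffs (blockCoeffs t P) := by
  conv_lhs => rw [hP.as_sum, h, ← Fin.sum_univ_eq_sum_range]
  rfl

end BlockCoeffs

section Krylov

variable {R : Type*} [CommRing R] {ι κ : Type*} [Fintype ι] [DecidableEq ι]

def krylov (J : Matrix ι ι R) (E : Matrix ι κ R) (t : ℕ) : Matrix ι (Fin t × κ) R :=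
  of fun x ia => (J ^ (ia.1 : ℕ) * E) x ia.2

def krylovSum [Fintype κ] [DecidableEq κ] (J : Matrix ι ι R) (E : Matrix ι κ R) (s : ℕ)
    (P : (Matrix κ κ R)[X]) : Matrix ι κ R :=
  ∑ i ∈ Finset.range s, J ^ i * E * P.coeff i

variable {J : Matrix ι ι R} {E : Matrix ι κ R} [Fintype κ]

lemma range_krylov_mono {t s : ℕ} (h : t ≤ s) :
    LinearMap.range (krylov J E t).mulVecLin ≤ LinearMap.range (krylov J E s).mulVecLin := by
  rw [range_mulVecLin, range_mulVecLin]
  exact Submodule.span_mono (Set.range_subset_iff.2 fun ia => ⟨(Fin.castLE h ia.1, ia.2), rfl⟩)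

lemma pow_mul_mulVec_mem_range_krylov {i t : ℕ} (h : i < t) (c : κ → R) :
    (J ^ i * E) *ᵥ c ∈ LinearMap.range (krylov J E t).mulVecLin := by
  have : LinearMap.range (J ^ i * E).mulVecLin ≤ LinearMap.range (krylov J E t).mulVecLin := by
    rw [range_mulVecLin, range_mulVecLin]
    exact Submodule.span_mono (Set.range_subset_iff.2 fun a => ⟨(⟨i, h⟩, a), rfl⟩)
  exact this (LinearMap.mem_range_self _ c)

variable [DecidableEq κ]

lemma krylov_mul_blockCoeffs (t : ℕ) (P : (Matrix κ κ R)[X]) :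
    krylov J E t * blockCoeffs t P = krylovSum J E t P := by
  ext x b
  simp only [krylov, blockCoeffs, krylovSum, mul_apply, of_apply, Fintype.sum_prod_type,
    Matrix.sum_apply]
  exact Fin.sum_univ_eq_sum_range (fun i => ∑ a, (J ^ i * E) x a * P.coeff i a b) t

lemma krylovSum_succ (t : ℕ) (P : (Matrix κ κ R)[X]) :
    krylovSum J E (t + 1) P = krylov J E t * blockCoeffs t P + J ^ t * E * P.coeff t := by
  rw [krylov_mul_blockCoeffs, krylovSum, Finset.sum_range_succ, krylovSum]

lemma krylovSum_succ_of_monic {t : ℕ} {P : (Matrix κ κ R)[X]} (hP : P.Monic)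
    (h : P.natDegree = t) :
    krylovSum J E (t + 1) P = J ^ t * E + krylov J E t * blockCoeffs t P := by
  rw [krylovSum_succ, ← h, hP.coeff_natDegree, Matrix.mul_one, add_comm]

end Krylov

lemma Matrix.conjTranspose_mul_vecMulVec_star_mul {R : Type*} [CommRing R] [StarRing R]
    {l m n : Type*} [Fintype l] (A : Matrix l m R) (B : Matrix l n R) (u : l → R) :
    Aᴴ * vecMulVec u (star u) * B = vecMulVec (star (star u ᵥ* A)) (star u ᵥ* B) := by
  rw [mul_vecMulVec, vecMulVec_mul, star_vecMul, star_star]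

structure IsOrthonormalEigenbasis {N : ℕ} (J : Matrix (Fin N) (Fin N) ℂ) (lam : Fin N → ℝ)
    (vhat : Fin N → Fin N → ℂ) : Prop where
  mulVec_eq : ∀ j, J *ᵥ vhat j = (lam j : ℂ) • vhat j
  orthonormal : ∀ i j, ∑ a, star (vhat i a) * vhat j a = if i = j then 1 else 0

namespace IsOrthonormalEigenbasis

variable {N k : ℕ} {J : Matrix (Fin N) (Fin N) ℂ} {lam : Fin N → ℝ} {vhat : Fin N → Fin N → ℂ}

lemma sum_vecMulVec_eq_one (h : IsOrthonormalEigenbasis J lam vhat) :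
    ∑ j, vecMulVec (vhat j) (star (vhat j)) = 1 := by
  set U : Matrix (Fin N) (Fin N) ℂ := of fun a j => vhat j a
  have hU : Uᴴ * U = 1 := by
    ext i j
    simpa [U, mul_apply, one_apply] using h.orthonormal i j
  have hU' : U * Uᴴ = 1 := mul_eq_one_comm.mp hU
  ext a b
  simpa [U, mul_apply, Matrix.sum_apply, vecMulVec_apply] using congrFun (congrFun hU' a) b

lemma star_vecMul_pow (hJ : J.IsHermitian) (h : IsOrthonormalEigenbasis J lam vhat)
    (j : Fin N) (i : ℕ) : star (vhat j) ᵥ* J ^ i = (lam j : ℂ) ^ i • star (vhat j) := by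
  induction i with
  | zero => simp
  | succ i ih =>
    rw [pow_succ, ← vecMul_vecMul, ih, smul_vecMul, ← hJ.eq, ← star_mulVec, h.mulVec_eq,
      star_smul, Complex.star_def, Complex.conj_ofReal, smul_smul, pow_succ]

lemma star_vecMul_krylovSum (hJ : J.IsHermitian) (h : IsOrthonormalEigenbasis J lam vhat)
    (E : Matrix (Fin N) (Fin k) ℂ) {s : ℕ} {P : (Matrix (Fin k) (Fin k) ℂ)[X]}
    (hP : P.natDegree < s) (j : Fin N) :
    star (vhat j) ᵥ* krylovSum J E s P = star (Eᴴ *ᵥ vhat j) ᵥ* P.eval ((lam j : ℂ) • 1) := by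
  rw [star_mulVec, conjTranspose_conjTranspose, eval_eq_sum_range' hP, krylovSum]
  simp only [vecMul_sum, ← vecMul_vecMul, star_vecMul_pow hJ h, smul_vecMul, _root_.smul_pow,
    one_pow, vecMul_smul, vecMul_one]

theorem innerPoly_eq (hJ : J.IsHermitian) (h : IsOrthonormalEigenbasis J lam vhat)
    {E : Matrix (Fin N) (Fin k) ℂ} {v : Fin N → Fin k → ℂ} (hv : ∀ j, v j = Eᴴ *ᵥ vhat j)
    {s : ℕ} {P Q : (Matrix (Fin k) (Fin k) ℂ)[X]} (hP : P.natDegree < s) (hQ : Q.natDegree < s) :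
    innerPoly lam v P Q = (krylovSum J E s P)ᴴ * krylovSum J E s Q := by
  calc innerPoly lam v P Q
      = ∑ j, (krylovSum J E s P)ᴴ * vecMulVec (vhat j) (star (vhat j)) * krylovSum J E s Q := by
        simp only [innerPoly, conjTranspose_mul_vecMulVec_star_mul, hv,
          star_vecMul_krylovSum hJ h E hP, star_vecMul_krylovSum hJ h E hQ]
    _ = (krylovSum J E s P)ᴴ * krylovSum J E s Q := by
        rw [← Matrix.sum_mul, ← Matrix.mul_sum, h.sum_vecMulVec_eq_one, Matrix.mul_one]

open scoped ComplexOrder in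
theorem rank_innerPoly_self (hJ : J.IsHermitian) (h : IsOrthonormalEigenbasis J lam vhat)
    {E : Matrix (Fin N) (Fin k) ℂ} {v : Fin N → Fin k → ℂ} (hv : ∀ j, v j = Eᴴ *ᵥ vhat j)
    {s : ℕ} {P : (Matrix (Fin k) (Fin k) ℂ)[X]} (hP : P.natDegree < s) :
    (innerPoly lam v P P).rank = (krylovSum J E s P).rank := by
  rw [h.innerPoly_eq hJ hv hP hP, rank_conjTranspose_mul_self]

open scoped ComplexOrder in
theorem forall_innerPoly_eq_zero_iff (hJ : J.IsHermitian) (h : IsOrthonormalEigenbasis J lam vhat)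
    {E : Matrix (Fin N) (Fin k) ℂ} {v : Fin N → Fin k → ℂ} (hv : ∀ j, v j = Eᴴ *ᵥ vhat j)
    {t : ℕ} (ht : 0 < t) {P : (Matrix (Fin k) (Fin k) ℂ)[X]} (hP : P.natDegree < t + 1) :
    (∀ Q : (Matrix (Fin k) (Fin k) ℂ)[X], Q.natDegree < t → innerPoly lam v Q P = 0) ↔
      (krylov J E t)ᴴ * krylovSum J E (t + 1) P = 0 := by
  have key (Q : (Matrix (Fin k) (Fin k) ℂ)[X]) (hQ : Q.natDegree < t) : innerPoly lam v Q P =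
      (blockCoeffs t Q)ᴴ * ((krylov J E t)ᴴ * krylovSum J E (t + 1) P) := by
    rw [h.innerPoly_eq hJ hv (hQ.trans t.lt_succ_self) hP, krylovSum_succ,
      coeff_eq_zero_of_natDegree_lt hQ, Matrix.mul_zero, add_zero, conjTranspose_mul,
      Matrix.mul_assoc]
  refine ⟨fun horth => ?_, fun h0 Q hQ => by rw [key Q hQ, h0, Matrix.mul_zero]⟩
  set D := (krylov J E t)ᴴ * krylovSum J E (t + 1) P
  have hD := key _ (natDegree_ofBlockCoeffs_lt ht D)
  rwa [horth _ (natDegree_ofBlockCoeffs_lt ht D), blockCoeffs_ofBlockCoeffs, eq_comm,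
    conjTranspose_mul_self_eq_zero] at hD

end IsOrthonormalEigenbasis

lemma UpperTriPosDiag.isUnit_det {k : ℕ} {M : Matrix (Fin k) (Fin k) ℂ}
    (hM : UpperTriPosDiag M) : IsUnit M.det := by
  rw [det_of_isUpperTriangular fun i j hij => (hM i j).1 hij, isUnit_iff_ne_zero,
    Finset.prod_ne_zero_iff]
  intro i _ h
  simpa [h] using ((hM i i).2 rfl).1

lemma UpperTriPosDiag.rowEchelonPosPivots {k : ℕ} {M : Matrix (Fin k) (Fin k) ℂ}
    (hM : UpperTriPosDiag M) : RowEchelonPosPivots M :=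
  ⟨id, strictMono_id, fun i => ⟨(hM i i).2 rfl, fun j hj => (hM i j).1 hj⟩⟩

lemma RowEchelonPosPivots.mulVec_surjective {r m : ℕ} {R : Matrix (Fin r) (Fin m) ℂ}
    (hR : RowEchelonPosPivots R) : Function.Surjective R.mulVec := by
  obtain ⟨p, hp, hpiv⟩ := hR
  have hS : UpperTriPosDiag (R.submatrix id p) :=
    fun i j => ⟨fun hji => (hpiv i).2 (p j) (hp hji), fun hij => hij ▸ (hpiv i).1⟩
  intro y
  obtain ⟨z, rfl⟩ := mulVec_surjective_iff_isUnit.2 ((isUnit_iff_isUnit_det _).2 hS.isUnit_det) y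
  refine ⟨fun j => ∑ i, if p i = j then z i else 0, funext fun a => ?_⟩
  simp [mulVec, dotProduct, Finset.mul_sum, Finset.sum_comm (γ := Fin m)]

def vanishingFrom (R : Type*) [Semiring R] (N r : ℕ) : Submodule R (Fin N → R) :=
  Submodule.pi {i : Fin N | r ≤ (i : ℕ)} fun _ => ⊥

lemma mem_vanishingFrom {R : Type*} [Semiring R] {N r : ℕ} {y : Fin N → R} :
    y ∈ vanishingFrom R N r ↔ ∀ i : Fin N, r ≤ (i : ℕ) → y i = 0 := by
  simp [vanishingFrom, Submodule.mem_pi]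

lemma le_finrank_of_vanishingFrom_le {K : Type*} [Field K] {N r : ℕ} (hr : r ≤ N)
    {V : Submodule K (Fin N → K)} (hV : vanishingFrom K N r ≤ V) : r ≤ Module.finrank K V := by
  set e : Fin r → Fin N → K := fun i => Pi.basisFun K (Fin N) (Fin.castLE hr i)
  have hli : LinearIndependent K e :=
    (Pi.basisFun K (Fin N)).linearIndependent.comp _ (Fin.castLE_injective hr)
  have hspan : Submodule.span K (Set.range e) ≤ V := by
    refine (Submodule.span_le.2 ?_).trans hV
    rintro _ ⟨i, rfl⟩
    rw [SetLike.mem_coe, mem_vanishingFrom]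
    intro j hj
    have : j ≠ Fin.castLE hr i := fun h => by subst h; simp at hj; omega
    simp [e, this]
  simpa [finrank_span_eq_card hli] using Submodule.finrank_mono hspan

def rowSelection (N p r : ℕ) : Matrix (Fin N) (Fin p) ℂ :=
  of fun i a => if (i : ℕ) = r + a then 1 else 0

lemma Esel_eq_rowSelection (k N b : ℕ) : Esel k N b = rowSelection N k (b * k) := rfl

lemma EselLast_eq_rowSelection (k n ℓ : ℕ) :
    EselLast k n ℓ = rowSelection (n * k - ℓ) (k - ℓ) ((n - 1) * k) := rfl

section RowSelection

variable {N p r : ℕ}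

lemma rowSelection_mulVec_apply (x : Fin p → ℂ) (i : Fin N) (h : r ≤ i) (h' : (i : ℕ) < r + p) :
    (rowSelection N p r *ᵥ x) i = x ⟨i - r, by omega⟩ := by
  rw [mulVec, dotProduct, Finset.sum_eq_single ⟨i - r, by omega⟩]
  · simp [rowSelection]; omega
  · intro a _ ha
    have : (i : ℕ) ≠ r + a := fun h'' => ha (Fin.ext (by simp; omega))
    simp [rowSelection, this]
  · simp

lemma rowSelection_mulVec_mem_vanishingFrom (x : Fin p → ℂ) :
    rowSelection N p r *ᵥ x ∈ vanishingFrom ℂ N (r + p) := by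
  rw [mem_vanishingFrom]
  intro i hi
  simp only [mulVec, dotProduct]
  refine Finset.sum_eq_zero fun a _ => ?_
  have : (i : ℕ) ≠ r + a := by omega
  simp [rowSelection, this]

lemma conjTranspose_rowSelection_mulVec_apply (u : Fin N → ℂ) (a : Fin p) (h : r + a < N) :
    ((rowSelection N p r)ᴴ *ᵥ u) a = u ⟨r + a, h⟩ := by
  rw [mulVec, dotProduct, Finset.sum_eq_single ⟨r + a, h⟩]
  · simp [rowSelection]
  · intro i _ hi
    have : (i : ℕ) ≠ r + a := fun h' => hi (Fin.ext h')
    simp [rowSelection, this]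
  · simp

lemma sub_mem_vanishingFrom_of_conjTranspose_rowSelection_mulVec_eq {s : ℕ} {u z : Fin N → ℂ}
    (hu : u ∈ vanishingFrom ℂ N s) (hz : z ∈ vanishingFrom ℂ N s)
    (hs : ∀ i : Fin N, (i : ℕ) < s → (i : ℕ) < r + p)
    (h : (rowSelection N p r)ᴴ *ᵥ u = (rowSelection N p r)ᴴ *ᵥ z) :
    z - u ∈ vanishingFrom ℂ N r := by
  rw [mem_vanishingFrom] at hu hz ⊢
  intro i hi
  by_cases his : (i : ℕ) < s
  · have hi' := congrFun h ⟨i - r, by have := hs i his; omega⟩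
    have hri : r + (i - r) < N := by omega
    rw [conjTranspose_rowSelection_mulVec_apply _ _ hri,
      conjTranspose_rowSelection_mulVec_apply _ _ hri] at hi'
    have hidx : (⟨r + (i - r), hri⟩ : Fin N) = i := Fin.ext (by simp only; omega)
    rw [hidx] at hi'
    rw [Pi.sub_apply, hi', sub_self]
  · rw [Pi.sub_apply, hu i (by omega), hz i (by omega), sub_self]

end RowSelection

namespace IsJkN

variable {k n ℓ : ℕ} {J : Matrix (Fin (n * k - ℓ)) (Fin (n * k - ℓ)) ℂ}

lemma mulVec_mem_vanishingFrom (hk : 0 < k) (hJ : IsJkN k n ℓ J) {t : ℕ}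
    {y : Fin (n * k - ℓ) → ℂ} (hy : y ∈ vanishingFrom ℂ (n * k - ℓ) (t * k)) :
    J *ᵥ y ∈ vanishingFrom ℂ (n * k - ℓ) ((t + 1) * k) := by
  rw [mem_vanishingFrom] at hy ⊢
  intro i hi
  simp only [mulVec, dotProduct]
  refine Finset.sum_eq_zero fun j _ => ?_
  by_cases hj : t * k ≤ j
  · rw [hy j hj, mul_zero]
  · have hjt : (j : ℕ) / k < t := (Nat.div_lt_iff_lt_mul hk).2 (by omega)
    have hit : t + 1 ≤ (i : ℕ) / k := (Nat.le_div_iff_mul_le hk).2 hi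
    rw [hJ.2.1 i j (Or.inr (by omega)), zero_mul]

lemma exists_sub_mulVec_Esel_mulVec_mem (hk : 0 < k) (hJ : IsJkN k n ℓ J) {t : ℕ} (ht : t + 2 ≤ n)
    {z : Fin (n * k - ℓ) → ℂ} (hz : z ∈ vanishingFrom ℂ (n * k - ℓ) ((t + 2) * k)) :
    ∃ x, z - J *ᵥ (Esel k (n * k - ℓ) t *ᵥ x) ∈ vanishingFrom ℂ (n * k - ℓ) ((t + 1) * k) := by
  have hJE (x : Fin k → ℂ) :
      J *ᵥ (Esel k (n * k - ℓ) t *ᵥ x) ∈ vanishingFrom ℂ (n * k - ℓ) ((t + 2) * k) :=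
    hJ.mulVec_mem_vanishingFrom hk (by
      simpa [Esel_eq_rowSelection, add_one_mul] using rowSelection_mulVec_mem_vanishingFrom x)
  have hblock : (t + 2) * k = (t + 1) * k + k := by ring
  -- block row `t + 1` is either a full one, reached through the triangular `B_t`, or the last
  -- one, of height `k - ℓ`, reached through the echelon block `B_{n-2}`
  rcases Nat.lt_or_ge (t + 2) n with hlt | hge
  · obtain ⟨x, hx⟩ := (hJ.2.2.1 t hlt).rowEchelonPosPivots.mulVec_surjective
      ((Esel k (n * k - ℓ) (t + 1))ᴴ *ᵥ z)
    refine ⟨x, sub_mem_vanishingFrom_of_conjTranspose_rowSelection_mulVec_eq (p := k) (hJE x) hz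
      (fun i hi => by omega) ?_⟩
    rw [← Esel_eq_rowSelection, ← hx, mulVec_mulVec, mulVec_mulVec, Matrix.mul_assoc]
  · obtain rfl : n = t + 2 := by omega
    obtain ⟨x, hx⟩ := hJ.2.2.2.mulVec_surjective ((EselLast k _ ℓ)ᴴ *ᵥ z)
    refine ⟨x, sub_mem_vanishingFrom_of_conjTranspose_rowSelection_mulVec_eq (p := k - ℓ) (hJE x) hz
      (fun i _ => ?_) ?_⟩
    · have := i.isLt
      omega
    · change (EselLast k (t + 2) ℓ)ᴴ *ᵥ (J *ᵥ (Esel k ((t + 2) * k - ℓ) (t + 2 - 2) *ᵥ x)) =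
        (EselLast k (t + 2) ℓ)ᴴ *ᵥ z
      rw [← hx, mulVec_mulVec, mulVec_mulVec, Matrix.mul_assoc]

lemma exists_sub_pow_mul_Esel_mulVec_mem (hk : 0 < k) (hJ : IsJkN k n ℓ J) :
    ∀ t, t + 1 ≤ n → ∀ z ∈ vanishingFrom ℂ (n * k - ℓ) ((t + 1) * k),
      ∃ c, z - (J ^ t * Esel k (n * k - ℓ) 0) *ᵥ c ∈ vanishingFrom ℂ (n * k - ℓ) (t * k)
  | 0, _, z, hz => by
    refine ⟨(Esel k (n * k - ℓ) 0)ᴴ *ᵥ z, ?_⟩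
    rw [mem_vanishingFrom] at hz
    rw [pow_zero, Matrix.one_mul, Esel_eq_rowSelection, mem_vanishingFrom]
    intro i _
    rw [Pi.sub_apply, sub_eq_zero]
    by_cases hi : (i : ℕ) < k
    · have hi' : 0 * k + (i - 0 * k) < n * k - ℓ := by simp
      rw [rowSelection_mulVec_apply (r := 0 * k) (p := k) _ i (by simp) (by simpa using hi),
        conjTranspose_rowSelection_mulVec_apply _ _ hi']
      simp
    · rw [hz i (by omega),
        mem_vanishingFrom.1 (rowSelection_mulVec_mem_vanishingFrom _) i (by omega)]
  | t + 1, ht, z, hz => by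
    obtain ⟨x, hx⟩ := hJ.exists_sub_mulVec_Esel_mulVec_mem hk ht hz
    have hy : Esel k (n * k - ℓ) t *ᵥ x ∈ vanishingFrom ℂ (n * k - ℓ) ((t + 1) * k) := by
      simpa [Esel_eq_rowSelection, add_one_mul] using rowSelection_mulVec_mem_vanishingFrom x
    obtain ⟨c, hc⟩ := exists_sub_pow_mul_Esel_mulVec_mem hk hJ t (by omega) _ hy
    refine ⟨c, ?_⟩
    have hsplit : z - (J ^ (t + 1) * Esel k (n * k - ℓ) 0) *ᵥ c =
        (z - J *ᵥ (Esel k (n * k - ℓ) t *ᵥ x)) +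
          J *ᵥ (Esel k (n * k - ℓ) t *ᵥ x - (J ^ t * Esel k (n * k - ℓ) 0) *ᵥ c) := by
      rw [pow_succ', Matrix.mul_assoc, ← mulVec_mulVec, mulVec_sub]
      abel
    rw [hsplit]
    exact add_mem hx (hJ.mulVec_mem_vanishingFrom hk hc)

lemma vanishingFrom_le_range_krylov (hk : 0 < k) (hJ : IsJkN k n ℓ J) :
    ∀ t, t ≤ n → vanishingFrom ℂ (n * k - ℓ) (t * k) ≤
      LinearMap.range (krylov J (Esel k (n * k - ℓ) 0) t).mulVecLin
  | 0, _, z, hz => by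
    have : z = 0 := funext fun i => mem_vanishingFrom.1 hz i (by simp)
    exact this ▸ zero_mem _
  | t + 1, ht, z, hz => by
    obtain ⟨c, hc⟩ := hJ.exists_sub_pow_mul_Esel_mulVec_mem hk t ht z hz
    rw [← sub_add_cancel z ((J ^ t * Esel k (n * k - ℓ) 0) *ᵥ c)]
    exact add_mem
      (range_krylov_mono t.le_succ (vanishingFrom_le_range_krylov hk hJ t (by omega) hc))
      (pow_mul_mulVec_mem_range_krylov t.lt_succ_self c)

lemma range_krylov_sup_range_pow_mul_eq_top (hk : 0 < k) (hJ : IsJkN k n ℓ J) (hn : 0 < n) :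
    LinearMap.range (krylov J (Esel k (n * k - ℓ) 0) (n - 1)).mulVecLin ⊔
      LinearMap.range (J ^ (n - 1) * Esel k (n * k - ℓ) 0).mulVecLin = ⊤ := by
  refine eq_top_iff.2 fun z _ => ?_
  have hz : z ∈ vanishingFrom ℂ (n * k - ℓ) ((n - 1 + 1) * k) :=
    mem_vanishingFrom.2 fun i hi => absurd i.isLt (by rw [Nat.sub_add_cancel hn] at hi; omega)
  obtain ⟨c, hc⟩ := hJ.exists_sub_pow_mul_Esel_mulVec_mem hk (n - 1) (by omega) z hz
  rw [← sub_add_cancel z ((J ^ (n - 1) * Esel k (n * k - ℓ) 0) *ᵥ c)]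
  exact Submodule.add_mem_sup (hJ.vanishingFrom_le_range_krylov hk (n - 1) (by omega) hc)
    (LinearMap.mem_range_self _ c)

lemma rank_krylov (hk : 0 < k) (hJ : IsJkN k n ℓ J) (hn : 0 < n) (hℓ : ℓ ≤ k) :
    (krylov J (Esel k (n * k - ℓ) 0) (n - 1)).rank = (n - 1) * k := by
  refine le_antisymm ((rank_le_card_width _).trans_eq (by simp)) ?_
  refine le_finrank_of_vanishingFrom_le ?_ (hJ.vanishingFrom_le_range_krylov hk (n - 1) (by omega))
  have := Nat.sub_one_mul n k
  have := Nat.le_mul_of_pos_left k hn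
  omega

end IsJkN

/-- For `J ∈ 𝒥_{k,N}` with spectral measure `μ = φ(J)`, the monic
orthogonal polynomial `Π_{n-1}` of degree `n-1` for `μ` exists, is unique, and its Gram
matrix `⟨Π_{n-1},Π_{n-1}⟩_μ` has rank `k - ℓ`. -/
theorem monic_orthogonal_polynomial_rank
    (k n ℓ : ℕ) (hk : 1 ≤ k) (hn : 2 ≤ n) (hℓ : ℓ < k)
    (J : Matrix (Fin (n * k - ℓ)) (Fin (n * k - ℓ)) ℂ) (hJ : IsJkN k n ℓ J)
    (lam : Fin (n * k - ℓ) → ℝ) (vhat : Fin (n * k - ℓ) → (Fin (n * k - ℓ) → ℂ))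
    (heig : ∀ j, J.mulVec (vhat j) = (lam j : ℂ) • vhat j)
    (horth : ∀ i j, ∑ a, star (vhat i a) * vhat j a = if i = j then 1 else 0)
    (v : Fin (n * k - ℓ) → Fin k → ℂ)
    (hv : ∀ j, v j = (Esel k (n * k - ℓ) 0)ᴴ.mulVec (vhat j)) :
    (∃! Pm : Polynomial (Matrix (Fin k) (Fin k) ℂ),
        Pm.Monic ∧ Pm.natDegree = n - 1 ∧
        (∀ Q : Polynomial (Matrix (Fin k) (Fin k) ℂ), Q.natDegree < n - 1 →
          innerPoly lam v Q Pm = 0)) ∧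
    (∀ Pm : Polynomial (Matrix (Fin k) (Fin k) ℂ),
        Pm.Monic → Pm.natDegree = n - 1 →
        (∀ Q : Polynomial (Matrix (Fin k) (Fin k) ℂ), Q.natDegree < n - 1 →
          innerPoly lam v Q Pm = 0) →
        (innerPoly lam v Pm Pm).rank = k - ℓ) := by
  have hbasis : IsOrthonormalEigenbasis J lam vhat := ⟨heig, horth⟩
  have : Nonempty (Fin k) := ⟨⟨0, hk⟩⟩
  have hrank := hJ.rank_krylov hk (by omega) hℓ.le
  have orthogonal_iff (P : (Matrix (Fin k) (Fin k) ℂ)[X]) (hP : P.Monic)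
      (hdeg : P.natDegree = n - 1) :
      (∀ Q : (Matrix (Fin k) (Fin k) ℂ)[X], Q.natDegree < n - 1 → innerPoly lam v Q P = 0) ↔
        (krylov J (Esel k (n * k - ℓ) 0) (n - 1))ᴴ * (J ^ (n - 1) * Esel k (n * k - ℓ) 0 +
          krylov J (Esel k (n * k - ℓ) 0) (n - 1) * blockCoeffs (n - 1) P) = 0 := by
    rw [hbasis.forall_innerPoly_eq_zero_iff hJ.1 hv (by omega) (by omega),
      krylovSum_succ_of_monic hP hdeg]
  obtain ⟨C, hC, hCuniq⟩ := existsUnique_conjTranspose_mul_add_mul_eq_zero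
    (mulVec_injective_of_card_le_rank (by rw [hrank]; simp)) (J ^ (n - 1) * Esel k (n * k - ℓ) 0)
  have hmon : (X ^ (n - 1) + ofBlockCoeffs C).Monic := monic_X_pow_add (degree_ofBlockCoeffs_lt C)
  have hdeg := natDegree_X_pow_add_ofBlockCoeffs C
  refine ⟨⟨X ^ (n - 1) + ofBlockCoeffs C, ⟨hmon, hdeg, (orthogonal_iff _ hmon hdeg).2 ?_⟩, ?_⟩, ?_⟩
  · rwa [blockCoeffs_X_pow_add, blockCoeffs_ofBlockCoeffs]
  · rintro P ⟨hP, hPdeg, hPorth⟩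
    rw [hP.eq_X_pow_add_ofBlockCoeffs hPdeg, hCuniq _ ((orthogonal_iff P hP hPdeg).1 hPorth)]
  · intro P hP hPdeg hPorth
    rw [hbasis.rank_innerPoly_self hJ.1 hv (s := n - 1 + 1) (by omega),
      krylovSum_succ_of_monic hP hPdeg]
    have hsum := rank_add_mul_add_rank_eq_card
      (hJ.range_krylov_sup_range_pow_mul_eq_top hk (by omega))
      ((orthogonal_iff P hP hPdeg).1 hPorth)
    rw [hrank, Fintype.card_fin] at hsum
    have := Nat.sub_one_mul n k
    have := Nat.le_mul_of_pos_left k (by omega : 0 < n)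
    omega
end
end

section
/- The spectral map on 𝒥_{k,N} is injective: if J, Ĵ ∈ 𝒥_{k,N} satisfy E_1^* J^i E_1 = E_1^* Ĵ^i E_1 for every integer i ≥ 0 (equivalently, J and Ĵ have the same spectral measure), then J = Ĵ. -/
open Matrix Polynomial

noncomputable section

namespace Spec8

lemma sum_isolate {s : ℕ} (f g : Fin s → ℂ) (i : Fin s)
    (h : ∀ j, j ≠ i → f j = g j) (hsum : ∑ j, f j = ∑ j, g j) : f i = g i := by
  have h2 := Finset.add_sum_erase Finset.univ f (Finset.mem_univ i)
  have h3 := Finset.add_sum_erase Finset.univ g (Finset.mem_univ i)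
  have h1 : ∑ j ∈ Finset.univ.erase i, f j = ∑ j ∈ Finset.univ.erase i, g j :=
    Finset.sum_congr rfl fun j hj => h j (Finset.ne_of_mem_erase hj)
  have h4 := h2.trans (hsum.trans h3.symm)
  rw [h1] at h4
  exact add_right_cancel h4

lemma sum_block {N : ℕ} (f : Fin N → ℂ) (lo s : ℕ) (hls : lo + s ≤ N)
    (hv : ∀ r : Fin N, ((r:ℕ) < lo ∨ lo + s ≤ (r:ℕ)) → f r = 0) :
    ∑ r, f r = ∑ d : Fin s, f ⟨lo + (d:ℕ), by omega⟩ := by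
  classical
  set g : Fin s → Fin N := fun d => ⟨lo + (d:ℕ), by omega⟩ with hgdef
  have hg : ∀ (a b : Fin s), g a = g b → a = b := by
    intro a b hab
    have : lo + (a:ℕ) = lo + (b:ℕ) := congrArg Fin.val hab
    exact Fin.ext (by omega)
  have h1 : ∑ r, f r = ∑ r ∈ Finset.image g Finset.univ, f r := by
    refine (Finset.sum_subset (Finset.subset_univ _) ?_).symm
    intro r _ hr
    refine hv r ?_
    by_contra hcon
    push_neg at hcon
    obtain ⟨h1', h2'⟩ := hcon
    refine hr (Finset.mem_image.mpr ⟨⟨(r:ℕ) - lo, by omega⟩, Finset.mem_univ _, ?_⟩)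
    apply Fin.ext
    simp only [hgdef]
    omega
  rw [h1, Finset.sum_image (fun a _ b _ hab => hg a b hab)]

lemma echelon_indep {r m : ℕ} (R : Matrix (Fin r) (Fin m) ℂ)
    (hR : RowEchelonPosPivots R) (y : Fin r → ℂ)
    (hy : ∀ c : Fin m, ∑ i, star (R i c) * y i = 0) :
    ∀ i, y i = 0 := by
  obtain ⟨p, hp, hpiv⟩ := hR
  have main : ∀ i : ℕ, ∀ hi : i < r, y ⟨i, hi⟩ = 0 := by
    intro i
    induction i using Nat.strong_induction_on with
    | _ i IH =>
      intro hi
      have hterm : ∀ j : Fin r, j ≠ ⟨i, hi⟩ → star (R j (p ⟨i, hi⟩)) * y j = 0 := by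
        intro j hj
        rcases lt_trichotomy (j : ℕ) i with h | h | h
        · have : y j = 0 := by have := IH j h j.isLt; simpa using this
          rw [this, mul_zero]
        · exact absurd (Fin.ext h) hj
        · have hpj : (p ⟨i,hi⟩ : ℕ) < (p j : ℕ) := hp (show (⟨i,hi⟩ : Fin r) < j from h)
          rw [(hpiv j).2 _ hpj, star_zero, zero_mul]
      have hsum := hy (p ⟨i, hi⟩)
      rw [Finset.sum_eq_single (⟨i,hi⟩ : Fin r)] at hsum
      · have hpz : R ⟨i,hi⟩ (p ⟨i,hi⟩) ≠ 0 := by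
          intro h0
          have hre := (hpiv ⟨i,hi⟩).1.1
          rw [h0] at hre; simp at hre
        have hsz : star (R ⟨i,hi⟩ (p ⟨i,hi⟩)) ≠ 0 := star_ne_zero.mpr hpz
        exact (mul_eq_zero.mp hsum).resolve_left hsz
      · intro j _ hj; exact hterm j hj
      · intro h; exact absurd (Finset.mem_univ _) h
  intro i; have := main i i.isLt; simpa using this

end Spec8

namespace Spec8

lemma pos_real_ne_zero {z : ℂ} (h : 0 < z.re) : z ≠ 0 := by
  intro h0; rw [h0] at h; simp at h

lemma echelon_pivot_aux {r m : ℕ} (R S : Matrix (Fin r) (Fin m) ℂ)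
    (p q : Fin r → Fin m) (hp : StrictMono p) (hq : StrictMono q)
    (hpivR : ∀ i : Fin r, (0 < (R i (p i)).re ∧ (R i (p i)).im = 0) ∧
      ∀ j : Fin m, (j:ℕ) < (p i : ℕ) → R i j = 0)
    (hpivS : ∀ i : Fin r, (0 < (S i (q i)).re ∧ (S i (q i)).im = 0) ∧
      ∀ j : Fin m, (j:ℕ) < (q i : ℕ) → S i j = 0)
    (hG : ∀ c c' : Fin m, ∑ j, star (R j c) * R j c' = ∑ j, star (S j c) * S j c')
    (i : Fin r) (IHrows : ∀ j : Fin r, j < i → ∀ c, R j c = S j c)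
    (hle : (p i : ℕ) ≤ (q i : ℕ)) : (p i : ℕ) = (q i : ℕ) := by
  by_contra hne
  have hlt : (p i : ℕ) < (q i : ℕ) := lt_of_le_of_ne hle hne
  have key := sum_isolate (fun j => star (R j (p i)) * R j (p i))
      (fun j => star (S j (p i)) * S j (p i)) i ?_ (hG (p i) (p i))
  · have hS0 : S i (p i) = 0 := (hpivS i).2 _ hlt
    simp only [hS0, mul_zero] at key
    have hR0 : R i (p i) = 0 := by
      have h2 : Complex.normSq (R i (p i)) = 0 := by
        have := key
        rw [Complex.star_def, ← Complex.normSq_eq_conj_mul_self] at this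
        exact_mod_cast this
      exact Complex.normSq_eq_zero.mp h2
    exact pos_real_ne_zero (hpivR i).1.1 hR0
  · intro j hj
    rcases lt_trichotomy j i with h | h | h
    · simp only [IHrows j h]
    · exact absurd h hj
    · have h1 : R j (p i) = 0 := (hpivR j).2 _ (hp h)
      have h2 : S j (p i) = 0 := (hpivS j).2 _ (lt_of_le_of_lt hle (hq h))
      simp [h1, h2]

lemma echelon_gram_uniq {r m : ℕ} (R S : Matrix (Fin r) (Fin m) ℂ)
    (hR : RowEchelonPosPivots R) (hS : RowEchelonPosPivots S)
    (hG : ∀ c c' : Fin m, ∑ j, star (R j c) * R j c' = ∑ j, star (S j c) * S j c') :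
    R = S := by
  obtain ⟨p, hp, hpivR⟩ := hR
  obtain ⟨q, hq, hpivS⟩ := hS
  have main : ∀ i : ℕ, ∀ hi : i < r, ∀ c, R ⟨i,hi⟩ c = S ⟨i,hi⟩ c := by
    intro i
    induction i using Nat.strong_induction_on with
    | _ i IH =>
      intro hi
      set i' : Fin r := ⟨i, hi⟩ with hi'
      have IHrows : ∀ j : Fin r, j < i' → ∀ c, R j c = S j c := by
        intro j hj c
        have := IH j hj j.isLt c
        simpa using this
      have hpq : (p i' : ℕ) = (q i' : ℕ) := by
        rcases le_total (p i' : ℕ) (q i' : ℕ) with h | h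
        · exact echelon_pivot_aux R S p q hp hq hpivR hpivS hG i' IHrows h
        · exact (echelon_pivot_aux S R q p hq hp hpivS hpivR (fun c c' => (hG c c').symm) i'
            (fun j hj c => (IHrows j hj c).symm) h).symm
      have hqp : q i' = p i' := Fin.ext hpq.symm
      have hrow : ∀ c, star (R i' (p i')) * R i' c = star (S i' (p i')) * S i' c := by
        intro c
        refine sum_isolate _ _ i' ?_ (hG (p i') c)
        intro j hj
        rcases lt_trichotomy j i' with h | h | h
        · simp only [IHrows j h]
        · exact absurd h hj
        · have h1 : R j (p i') = 0 := (hpivR j).2 _ (hp h)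
          have h2 : S j (p i') = 0 := by
            refine (hpivS j).2 _ ?_
            have : (q i' : ℕ) < (q j : ℕ) := hq h
            omega
          simp [h1, h2]
      obtain ⟨hreR, himR⟩ := (hpivR i').1
      have hreS : 0 < (S i' (p i')).re := by rw [← hqp]; exact (hpivS i').1.1
      have himS : (S i' (p i')).im = 0 := by rw [← hqp]; exact (hpivS i').1.2
      set z := R i' (p i') with hz
      set w := S i' (p i') with hw
      have hzstar : star z = z := by
        rw [Complex.star_def, Complex.conj_eq_iff_im]; exact himR
      have hwstar : star w = w := by
        rw [Complex.star_def, Complex.conj_eq_iff_im]; exact himS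
      have hzw : z = w := by
        have h2 : z * z = w * w := by
          have := hrow (p i'); rwa [hzstar, hwstar] at this
        have h3 : (z - w) * (z + w) = 0 := by ring_nf; linear_combination h2
        rcases mul_eq_zero.mp h3 with h | h
        · exact sub_eq_zero.mp h
        · exfalso
          have : (z + w).re = 0 := by rw [h]; simp
          rw [Complex.add_re] at this
          linarith
      intro c
      have hc := hrow c
      rw [← hzw] at hc
      have hz0 : star z ≠ 0 := star_ne_zero.mpr (pos_real_ne_zero hreR)
      exact mul_left_cancel₀ hz0 hc
  ext i c
  have := main i i.isLt c
  simpa using this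

lemma utpd_echelon {s : ℕ} (M : Matrix (Fin s) (Fin s) ℂ) (h : UpperTriPosDiag M) :
    RowEchelonPosPivots M :=
  ⟨fun i => i, fun _ _ hab => hab, fun i => ⟨(h i i).2 rfl, fun j hj => (h i j).1 hj⟩⟩

lemma pos_real_mul {z w : ℂ} (hz : 0 < z.re ∧ z.im = 0) (hw : 0 < w.re ∧ w.im = 0) :
    0 < (z * w).re ∧ (z * w).im = 0 := by
  constructor
  · rw [Complex.mul_re, hz.2, hw.2]; simpa using mul_pos hz.1 hw.1
  · rw [Complex.mul_im, hz.2, hw.2]; ring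

lemma utpd_one {s : ℕ} : UpperTriPosDiag (1 : Matrix (Fin s) (Fin s) ℂ) := by
  intro r c
  constructor
  · intro h
    rw [Matrix.one_apply_ne]
    intro hrc; rw [hrc] at h; omega
  · intro h; subst h; simp [Matrix.one_apply]

lemma utpd_mul {s : ℕ} (A B : Matrix (Fin s) (Fin s) ℂ)
    (hA : UpperTriPosDiag A) (hB : UpperTriPosDiag B) : UpperTriPosDiag (A * B) := by
  intro r c
  constructor
  · intro hcr
    rw [Matrix.mul_apply]
    apply Finset.sum_eq_zero
    intro d _
    rcases lt_or_ge (d:ℕ) (r:ℕ) with h | h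
    · rw [(hA r d).1 h, zero_mul]
    · rw [(hB d c).1 (lt_of_lt_of_le hcr h), mul_zero]
  · intro hrc; subst hrc
    rw [Matrix.mul_apply, Finset.sum_eq_single r]
    · exact pos_real_mul ((hA r r).2 rfl) ((hB r r).2 rfl)
    · intro d _ hd
      rcases lt_or_ge (d:ℕ) (r:ℕ) with h | h
      · rw [(hA r d).1 h, zero_mul]
      · have hrd : (r:ℕ) < (d:ℕ) := by
          rcases lt_or_eq_of_le h with h' | h'
          · exact h'
          · exact absurd (Fin.ext h'.symm) hd
        rw [(hB d r).1 hrd, mul_zero]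
    · intro h; exact absurd (Finset.mem_univ _) h

lemma echelon_mul_utpd {r m : ℕ} (Bl : Matrix (Fin r) (Fin m) ℂ) (P : Matrix (Fin m) (Fin m) ℂ)
    (hBl : RowEchelonPosPivots Bl) (hP : UpperTriPosDiag P) :
    RowEchelonPosPivots (Bl * P) := by
  obtain ⟨p, hp, hpiv⟩ := hBl
  refine ⟨p, hp, fun i => ⟨?_, ?_⟩⟩
  · rw [Matrix.mul_apply, Finset.sum_eq_single (p i)]
    · exact pos_real_mul (hpiv i).1 ((hP (p i) (p i)).2 rfl)
    · intro d _ hd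
      rcases lt_or_ge (d:ℕ) ((p i):ℕ) with h | h
      · rw [(hpiv i).2 d h, zero_mul]
      · have hrd : ((p i):ℕ) < (d:ℕ) := by
          rcases lt_or_eq_of_le h with h' | h'
          · exact h'
          · exact absurd (Fin.ext h'.symm) hd
        rw [(hP d (p i)).1 hrd, mul_zero]
    · intro h; exact absurd (Finset.mem_univ _) h
  · intro j hj
    rw [Matrix.mul_apply]
    apply Finset.sum_eq_zero
    intro d _
    rcases lt_or_ge (d:ℕ) ((p i):ℕ) with h | h
    · rw [(hpiv i).2 d h, zero_mul]
    · rw [(hP d j).1 (lt_of_lt_of_le hj h), mul_zero]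

end Spec8

namespace Spec8

lemma EselT_mul_apply {k N m : ℕ} (b : ℕ) (M : Matrix (Fin N) (Fin m) ℂ)
    (a : Fin k) (j : Fin m) (h : b*k + (a:ℕ) < N) :
    ((Esel k N b)ᴴ * M) a j = M ⟨b*k + (a:ℕ), h⟩ j := by
  rw [Matrix.mul_apply, Finset.sum_eq_single (⟨b*k + (a:ℕ), h⟩ : Fin N)]
  · rw [Matrix.conjTranspose_apply]
    simp [Esel]
  · intro r _ hr
    have hne : ¬ ((r:ℕ) = b*k + (a:ℕ)) := fun hc => hr (Fin.ext hc)
    rw [Matrix.conjTranspose_apply]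
    simp [Esel, hne]
  · intro h'; exact absurd (Finset.mem_univ _) h'

lemma mul_Esel_apply {k N m : ℕ} (b : ℕ) (M : Matrix (Fin m) (Fin N) ℂ)
    (i : Fin m) (a : Fin k) (h : b*k + (a:ℕ) < N) :
    (M * Esel k N b) i a = M i ⟨b*k + (a:ℕ), h⟩ := by
  rw [Matrix.mul_apply, Finset.sum_eq_single (⟨b*k + (a:ℕ), h⟩ : Fin N)]
  · simp [Esel]
  · intro r _ hr
    have hne : ¬ ((r:ℕ) = b*k + (a:ℕ)) := fun hc => hr (Fin.ext hc)
    simp [Esel, hne]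
  · intro h'; exact absurd (Finset.mem_univ _) h'

lemma EselLastT_mul_apply {k n ℓ m : ℕ} (M : Matrix (Fin (n*k-ℓ)) (Fin m) ℂ)
    (a : Fin (k-ℓ)) (j : Fin m) (h : (n-1)*k + (a:ℕ) < n*k-ℓ) :
    ((EselLast k n ℓ)ᴴ * M) a j = M ⟨(n-1)*k + (a:ℕ), h⟩ j := by
  rw [Matrix.mul_apply, Finset.sum_eq_single (⟨(n-1)*k + (a:ℕ), h⟩ : Fin (n*k-ℓ))]
  · rw [Matrix.conjTranspose_apply]
    simp [EselLast]
  · intro r _ hr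
    have hne : ¬ ((r:ℕ) = (n-1)*k + (a:ℕ)) := fun hc => hr (Fin.ext hc)
    rw [Matrix.conjTranspose_apply]
    simp [EselLast, hne]
  · intro h'; exact absurd (Finset.mem_univ _) h'

lemma mul_EselLast_apply {k n ℓ m : ℕ} (M : Matrix (Fin m) (Fin (n*k-ℓ)) ℂ)
    (i : Fin m) (a : Fin (k-ℓ)) (h : (n-1)*k + (a:ℕ) < n*k-ℓ) :
    (M * EselLast k n ℓ) i a = M i ⟨(n-1)*k + (a:ℕ), h⟩ := by
  rw [Matrix.mul_apply, Finset.sum_eq_single (⟨(n-1)*k + (a:ℕ), h⟩ : Fin (n*k-ℓ))]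
  · simp [EselLast]
  · intro r _ hr
    have hne : ¬ ((r:ℕ) = (n-1)*k + (a:ℕ)) := fun hc => hr (Fin.ext hc)
    simp [EselLast, hne]
  · intro h'; exact absurd (Finset.mem_univ _) h'

variable {k n ℓ : ℕ}

lemma pow_supp (hk : 1 ≤ k) (J : Matrix (Fin (n*k-ℓ)) (Fin (n*k-ℓ)) ℂ)
    (hband : ∀ i j : Fin (n*k-ℓ),
      ((i:ℕ)/k + 2 ≤ (j:ℕ)/k ∨ (j:ℕ)/k + 2 ≤ (i:ℕ)/k) → J i j = 0) :
    ∀ (i : ℕ) (r : Fin (n*k-ℓ)) (a : Fin k), (i+1)*k ≤ (r:ℕ) →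
      (J^i * Esel k (n*k-ℓ) 0) r a = 0 := by
  intro i
  induction i with
  | zero =>
    intro r a hr
    rw [pow_zero, Matrix.one_mul]
    show (if (r:ℕ) = 0*k + (a:ℕ) then (1:ℂ) else 0) = 0
    rw [if_neg]
    omega
  | succ i IH =>
    intro r a hr
    rw [pow_succ', Matrix.mul_assoc, Matrix.mul_apply]
    apply Finset.sum_eq_zero
    intro c _
    rcases lt_or_ge (c:ℕ) ((i+1)*k) with h | h
    · have hcd : (c:ℕ)/k < i+1 := by
        rw [Nat.div_lt_iff_lt_mul (by omega)]
        calc (c:ℕ) < (i+1)*k := h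
          _ = (i+1)*k := rfl
      have hrd : i + 2 ≤ (r:ℕ)/k := by
        rw [Nat.le_div_iff_mul_le (by omega)]
        calc (i+2)*k = (i+1+1)*k := rfl
          _ ≤ (r:ℕ) := hr
      rw [hband r c (Or.inr (by omega)), zero_mul]
    · rw [IH c a h, mul_zero]

lemma block_rec_mid (hk : 1 ≤ k) (hℓ : ℓ < k) (J : Matrix (Fin (n*k-ℓ)) (Fin (n*k-ℓ)) ℂ)
    (hband : ∀ i j : Fin (n*k-ℓ),
      ((i:ℕ)/k + 2 ≤ (j:ℕ)/k ∨ (j:ℕ)/k + 2 ≤ (i:ℕ)/k) → J i j = 0)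
    (i : ℕ) (hi : i + 3 ≤ n) :
    (Esel k (n*k-ℓ) (i+1))ᴴ * (J^(i+1) * Esel k (n*k-ℓ) 0) =
      ((Esel k (n*k-ℓ) (i+1))ᴴ * J * Esel k (n*k-ℓ) i) *
        ((Esel k (n*k-ℓ) i)ᴴ * (J^i * Esel k (n*k-ℓ) 0)) := by
  have hnk : (i+2)*k ≤ (n-1)*k := Nat.mul_le_mul_right k (by omega)
  have hnk2 : (n-1)*k + k = n*k := by
    have : (n-1) + 1 = n := by omega
    calc (n-1)*k + k = ((n-1)+1)*k := by ring
      _ = n*k := by rw [this]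
  have hb1 : ∀ d : ℕ, d < k → (i+1)*k + d < n*k - ℓ := by
    intro d hd
    have h1 : (i+1)*k + d < (i+2)*k := by
      have : (i+1)*k + k = (i+2)*k := by ring
      omega
    omega
  have hb2 : ∀ d : ℕ, d < k → i*k + d < n*k - ℓ := by
    intro d hd
    have h1 : i*k + d < (i+1)*k := by
      have : i*k + k = (i+1)*k := by ring
      omega
    have h2 : (i+1)*k ≤ (i+2)*k := Nat.mul_le_mul_right k (by omega)
    omega
  ext a b
  rw [EselT_mul_apply (i+1) _ a b (hb1 a a.isLt)]
  rw [pow_succ', Matrix.mul_assoc, Matrix.mul_apply, Matrix.mul_apply]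
  have hrw : ∀ d : Fin k,
      ((Esel k (n*k-ℓ) (i+1))ᴴ * J * Esel k (n*k-ℓ) i) a d *
        ((Esel k (n*k-ℓ) i)ᴴ * (J^i * Esel k (n*k-ℓ) 0)) d b =
      J ⟨(i+1)*k + (a:ℕ), hb1 a a.isLt⟩ ⟨i*k + (d:ℕ), hb2 d d.isLt⟩ *
        (J^i * Esel k (n*k-ℓ) 0) ⟨i*k + (d:ℕ), hb2 d d.isLt⟩ b := by
    intro d
    rw [mul_Esel_apply i _ a d (hb2 d d.isLt), EselT_mul_apply (i+1) _ a _ (hb1 a a.isLt),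
      EselT_mul_apply i _ d b (hb2 d d.isLt)]
  rw [Finset.sum_congr rfl (fun d _ => hrw d)]
  have hbound : i*k + k ≤ n*k - ℓ := by
    have h3 : i*k + k + k = (i+2)*k := by ring
    omega
  have h4 : i*k + k = (i+1)*k := by ring
  have hv : ∀ c : Fin (n*k-ℓ), ((c:ℕ) < i*k ∨ i*k + k ≤ (c:ℕ)) →
      J ⟨(i+1)*k + (a:ℕ), hb1 a a.isLt⟩ c * (J^i * Esel k (n*k-ℓ) 0) c b = 0 := by
    intro c hc
    rcases hc with h | h
    · rcases Nat.eq_zero_or_pos i with rfl | hipos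
      · exact absurd h (by omega)
      · have hcd : (c:ℕ)/k < i := by
          rw [Nat.div_lt_iff_lt_mul (by omega)]
          have h5 : i*k = k*i := by ring
          omega
        have hrd : i + 1 ≤ ((i+1)*k + (a:ℕ))/k := by
          rw [Nat.le_div_iff_mul_le (by omega)]
          omega
        have hval : ((⟨(i+1)*k + (a:ℕ), hb1 a a.isLt⟩ : Fin (n*k-ℓ)) : ℕ)
            = (i+1)*k + (a:ℕ) := rfl
        rw [hband _ c (Or.inr (by rw [hval]; omega)), zero_mul]
    · rw [pow_supp hk J hband i c b (by omega), mul_zero]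
  rw [sum_block _ (i*k) k hbound hv]

end Spec8

namespace Spec8

variable {k n ℓ : ℕ}

lemma block_rec_last (hk : 1 ≤ k) (hℓ : ℓ < k) (hn : 2 ≤ n)
    (J : Matrix (Fin (n*k-ℓ)) (Fin (n*k-ℓ)) ℂ)
    (hband : ∀ i j : Fin (n*k-ℓ),
      ((i:ℕ)/k + 2 ≤ (j:ℕ)/k ∨ (j:ℕ)/k + 2 ≤ (i:ℕ)/k) → J i j = 0) :
    (EselLast k n ℓ)ᴴ * (J^(n-1) * Esel k (n*k-ℓ) 0) =
      ((EselLast k n ℓ)ᴴ * J * Esel k (n*k-ℓ) (n-2)) *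
        ((Esel k (n*k-ℓ) (n-2))ᴴ * (J^(n-2) * Esel k (n*k-ℓ) 0)) := by
  have hn1 : (n-2) + 1 = n - 1 := by omega
  have hn2 : (n-1) + 1 = n := by omega
  have hp1 : (n-1)*k + k = n*k := by
    calc (n-1)*k + k = ((n-1)+1)*k := by ring
      _ = n*k := by rw [hn2]
  have hp2 : (n-2)*k + k = (n-1)*k := by
    calc (n-2)*k + k = ((n-2)+1)*k := by ring
      _ = (n-1)*k := by rw [hn1]
  have hb1 : ∀ d : ℕ, d < k - ℓ → (n-1)*k + d < n*k - ℓ := by intro d hd; omega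
  have hb2 : ∀ d : ℕ, d < k → (n-2)*k + d < n*k - ℓ := by intro d hd; omega
  ext a b
  rw [EselLastT_mul_apply _ a b (hb1 a a.isLt)]
  rw [show J^(n-1) = J * J^(n-2) by rw [← hn1, pow_succ']]
  rw [Matrix.mul_assoc, Matrix.mul_apply, Matrix.mul_apply]
  have hrw : ∀ d : Fin k,
      ((EselLast k n ℓ)ᴴ * J * Esel k (n*k-ℓ) (n-2)) a d *
        ((Esel k (n*k-ℓ) (n-2))ᴴ * (J^(n-2) * Esel k (n*k-ℓ) 0)) d b =
      J ⟨(n-1)*k + (a:ℕ), hb1 a a.isLt⟩ ⟨(n-2)*k + (d:ℕ), hb2 d d.isLt⟩ *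
        (J^(n-2) * Esel k (n*k-ℓ) 0) ⟨(n-2)*k + (d:ℕ), hb2 d d.isLt⟩ b := by
    intro d
    rw [mul_Esel_apply (n-2) _ a d (hb2 d d.isLt), EselLastT_mul_apply _ a _ (hb1 a a.isLt),
      EselT_mul_apply (n-2) _ d b (hb2 d d.isLt)]
  rw [Finset.sum_congr rfl (fun d _ => hrw d)]
  have hbound : (n-2)*k + k ≤ n*k - ℓ := by omega
  have hv : ∀ c : Fin (n*k-ℓ), ((c:ℕ) < (n-2)*k ∨ (n-2)*k + k ≤ (c:ℕ)) →
      J ⟨(n-1)*k + (a:ℕ), hb1 a a.isLt⟩ c * (J^(n-2) * Esel k (n*k-ℓ) 0) c b = 0 := by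
    intro c hc
    rcases hc with h | h
    · rcases Nat.eq_zero_or_pos (n-2) with hz | hipos
      · rw [hz] at h; exact absurd h (by omega)
      · have hcd : (c:ℕ)/k < n-2 := by
          rw [Nat.div_lt_iff_lt_mul (by omega)]
          have h5 : (n-2)*k = k*(n-2) := by ring
          omega
        have hrd : n - 1 ≤ ((n-1)*k + (a:ℕ))/k := by
          rw [Nat.le_div_iff_mul_le (by omega)]
          omega
        have hval : ((⟨(n-1)*k + (a:ℕ), hb1 a a.isLt⟩ : Fin (n*k-ℓ)) : ℕ)
            = (n-1)*k + (a:ℕ) := rfl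
        rw [hband _ c (Or.inr (by rw [hval]; omega)), zero_mul]
    · have h6 : (n-2+1)*k = (n-2)*k + k := by ring
      rw [pow_supp hk J hband (n-2) c b (by omega), mul_zero]
  rw [sum_block _ ((n-2)*k) k hbound hv]

lemma Ptri (hk : 1 ≤ k) (hℓ : ℓ < k) (J : Matrix (Fin (n*k-ℓ)) (Fin (n*k-ℓ)) ℂ)
    (hband : ∀ i j : Fin (n*k-ℓ),
      ((i:ℕ)/k + 2 ≤ (j:ℕ)/k ∨ (j:ℕ)/k + 2 ≤ (i:ℕ)/k) → J i j = 0)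
    (htri : ∀ b : ℕ, b + 3 ≤ n →
      UpperTriPosDiag ((Esel k (n*k-ℓ) (b+1))ᴴ * J * Esel k (n*k-ℓ) b)) :
    ∀ b : ℕ, b + 2 ≤ n →
      UpperTriPosDiag ((Esel k (n*k-ℓ) b)ᴴ * (J^b * Esel k (n*k-ℓ) 0)) := by
  intro b
  induction b with
  | zero =>
    intro hb
    have hone : (Esel k (n*k-ℓ) 0)ᴴ * (J^0 * Esel k (n*k-ℓ) 0) = 1 := by
      rw [pow_zero, Matrix.one_mul]
      ext a c
      have hbd : 0*k + (a:ℕ) < n*k - ℓ := by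
        have h1 : (a:ℕ) < k := a.isLt
        have h2 : 2*k ≤ n*k := Nat.mul_le_mul_right k hb
        omega
      rw [EselT_mul_apply 0 _ a c hbd]
      show (if (0*k + (a:ℕ) : ℕ) = 0*k + (c:ℕ) then (1:ℂ) else 0) = (1 : Matrix (Fin k) (Fin k) ℂ) a c
      by_cases hac : a = c
      · subst hac; simp [Matrix.one_apply]
      · rw [if_neg (by intro hcon; exact hac (Fin.ext (by omega)))]
        rw [Matrix.one_apply_ne hac]
    rw [hone]
    exact utpd_one
  | succ b IH =>
    intro hb
    rw [block_rec_mid hk hℓ J hband b (by omega)]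
    exact utpd_mul _ _ (htri b (by omega)) (IH (by omega))

lemma span_lemma (hk : 1 ≤ k) (hℓ : ℓ < k) (J : Matrix (Fin (n*k-ℓ)) (Fin (n*k-ℓ)) ℂ)
    (hband : ∀ i j : Fin (n*k-ℓ),
      ((i:ℕ)/k + 2 ≤ (j:ℕ)/k ∨ (j:ℕ)/k + 2 ≤ (i:ℕ)/k) → J i j = 0)
    (htri : ∀ b : ℕ, b + 3 ≤ n →
      UpperTriPosDiag ((Esel k (n*k-ℓ) (b+1))ᴴ * J * Esel k (n*k-ℓ) b))
    (m : ℕ) (hm : m + 2 ≤ n) (x : Fin (n*k-ℓ) → ℂ)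
    (hx : ∀ j, j ≤ m → ∀ a : Fin k,
      ∑ r, star ((J^j * Esel k (n*k-ℓ) 0) r a) * x r = 0) :
    ∀ r : Fin (n*k-ℓ), (r:ℕ) < (m+1)*k → x r = 0 := by
  have hmk : (m+1)*k ≤ (n-1)*k := Nat.mul_le_mul_right k (by omega)
  have hp1 : (n-1)*k + k = n*k := by
    have h2 : (n-1) + 1 = n := by omega
    calc (n-1)*k + k = ((n-1)+1)*k := by ring
      _ = n*k := by rw [h2]
  have main : ∀ v, ∀ r : Fin (n*k-ℓ), (r:ℕ) = v → (r:ℕ) < (m+1)*k → x r = 0 := by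
    intro v
    induction v using Nat.strong_induction_on with
    | _ v IH =>
      intro r hrv hr
      obtain ⟨b, d, hdk, hrbd⟩ : ∃ b d, d < k ∧ (r:ℕ) = b*k + d := by
        refine ⟨(r:ℕ)/k, (r:ℕ)%k, Nat.mod_lt _ (by omega), ?_⟩
        have h1 := Nat.div_add_mod (r:ℕ) k
        have h2 : (r:ℕ)/k * k = k * ((r:ℕ)/k) := Nat.mul_comm _ _
        omega
      have hbm : b ≤ m := by
        by_contra hc
        push_neg at hc
        have := Nat.mul_le_mul_right k hc
        have h2 : (m+1)*k ≤ b*k := by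
          calc (m+1)*k ≤ (m+1)*k := le_refl _
            _ ≤ b*k := Nat.mul_le_mul_right k hc
        omega
      have hbb1 : b*k + k = (b+1)*k := by ring
      have hbbd : ∀ e : ℕ, e < k → b*k + e < n*k - ℓ := by
        intro e he
        have h1 : (b+1)*k ≤ (m+1)*k := Nat.mul_le_mul_right k (by omega)
        omega
      set y : Fin k → ℂ := fun e => x ⟨b*k + (e:ℕ), hbbd e e.isLt⟩ with hydef
      have h0 : ∀ a : Fin k,
          ∑ e : Fin k, star (((Esel k (n*k-ℓ) b)ᴴ * (J^b * Esel k (n*k-ℓ) 0)) e a) * y e = 0 := by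
        intro a
        have h1 := hx b hbm a
        have hbound : b*k + k ≤ n*k - ℓ := by
          have h3 : (b+1)*k ≤ (m+1)*k := Nat.mul_le_mul_right k (by omega)
          omega
        have hv : ∀ c : Fin (n*k-ℓ), ((c:ℕ) < b*k ∨ b*k + k ≤ (c:ℕ)) →
            star ((J^b * Esel k (n*k-ℓ) 0) c a) * x c = 0 := by
          intro c hc
          rcases hc with h | h
          · have hxc : x c = 0 := IH (c:ℕ) (by omega) c rfl (by omega)
            rw [hxc, mul_zero]
          · have h6 : (b+1)*k = b*k + k := by ring
            rw [pow_supp hk J hband b c a (by omega), star_zero, zero_mul]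
        rw [sum_block _ (b*k) k hbound hv] at h1
        rw [← h1]
        refine Finset.sum_congr rfl fun e _ => ?_
        congr 1
        rw [EselT_mul_apply b _ e a (hbbd e e.isLt)]
      have hy0 := echelon_indep _ (utpd_echelon _ (Ptri hk hℓ J hband htri b (by omega))) y h0
      have hfin : r = ⟨b*k + d, hbbd d hdk⟩ := Fin.ext (by simpa using hrbd)
      rw [hfin]
      exact hy0 ⟨d, hdk⟩
  intro r hr
  exact main (r:ℕ) r rfl hr

end Spec8

namespace Spec8

variable {k n ℓ : ℕ}

lemma span_full (hk : 1 ≤ k) (hℓ : ℓ < k) (hn : 2 ≤ n)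
    (J : Matrix (Fin (n*k-ℓ)) (Fin (n*k-ℓ)) ℂ)
    (hband : ∀ i j : Fin (n*k-ℓ),
      ((i:ℕ)/k + 2 ≤ (j:ℕ)/k ∨ (j:ℕ)/k + 2 ≤ (i:ℕ)/k) → J i j = 0)
    (htri : ∀ b : ℕ, b + 3 ≤ n →
      UpperTriPosDiag ((Esel k (n*k-ℓ) (b+1))ᴴ * J * Esel k (n*k-ℓ) b))
    (hech : RowEchelonPosPivots ((EselLast k n ℓ)ᴴ * J * Esel k (n*k-ℓ) (n-2)))
    (x : Fin (n*k-ℓ) → ℂ)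
    (hx : ∀ j, j ≤ n-1 → ∀ a : Fin k,
      ∑ r, star ((J^j * Esel k (n*k-ℓ) 0) r a) * x r = 0) :
    ∀ r, x r = 0 := by
  have hn21 : n - 2 + 1 = n - 1 := by omega
  have hp1 : (n-1)*k + k = n*k := by
    have h2 : (n-1) + 1 = n := by omega
    calc (n-1)*k + k = ((n-1)+1)*k := by ring
      _ = n*k := by rw [h2]
  have h1 : ∀ r : Fin (n*k-ℓ), (r:ℕ) < (n-1)*k → x r = 0 := by
    have hs := span_lemma hk hℓ J hband htri (n-2) (by omega) x (fun j hj => hx j (by omega))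
    intro r hr
    exact hs r (by rw [hn21]; exact hr)
  have hbbd : ∀ e : ℕ, e < k - ℓ → (n-1)*k + e < n*k - ℓ := by intro e he; omega
  set y : Fin (k-ℓ) → ℂ := fun e => x ⟨(n-1)*k + (e:ℕ), hbbd e e.isLt⟩ with hydef
  have h0 : ∀ a : Fin k,
      ∑ e : Fin (k-ℓ), star (((EselLast k n ℓ)ᴴ * (J^(n-1) * Esel k (n*k-ℓ) 0)) e a) * y e = 0 := by
    intro a
    have hsum := hx (n-1) (le_refl _) a
    have hbound : (n-1)*k + (k-ℓ) ≤ n*k - ℓ := by omega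
    have hv : ∀ c : Fin (n*k-ℓ), ((c:ℕ) < (n-1)*k ∨ (n-1)*k + (k-ℓ) ≤ (c:ℕ)) →
        star ((J^(n-1) * Esel k (n*k-ℓ) 0) c a) * x c = 0 := by
      intro c hc
      rcases hc with h | h
      · rw [h1 c h, mul_zero]
      · exact absurd c.isLt (by omega)
    rw [sum_block _ ((n-1)*k) (k-ℓ) hbound hv] at hsum
    rw [← hsum]
    refine Finset.sum_congr rfl fun e _ => ?_
    congr 1
    rw [EselLastT_mul_apply _ e a (hbbd e e.isLt)]
  have hPl : RowEchelonPosPivots ((EselLast k n ℓ)ᴴ * (J^(n-1) * Esel k (n*k-ℓ) 0)) := by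
    rw [block_rec_last hk hℓ hn J hband]
    exact echelon_mul_utpd _ _ hech (Ptri hk hℓ J hband htri (n-2) (by omega))
  have hy0 := echelon_indep _ hPl y h0
  intro r
  rcases lt_or_ge (r:ℕ) ((n-1)*k) with h | h
  · exact h1 r h
  · have hd : (r:ℕ) - (n-1)*k < k - ℓ := by
      have := r.isLt
      omega
    have hfin : r = ⟨(n-1)*k + ((r:ℕ) - (n-1)*k), hbbd _ hd⟩ := Fin.ext (by simp; omega)
    rw [hfin]
    exact hy0 ⟨(r:ℕ) - (n-1)*k, hd⟩

end Spec8

namespace Spec8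

lemma gram_entry {N m m' : ℕ} (A : Matrix (Fin N) (Fin m) ℂ) (B : Matrix (Fin N) (Fin m') ℂ)
    (a : Fin m) (c : Fin m') : (Aᴴ * B) a c = ∑ r, star (A r a) * B r c := by
  rw [Matrix.mul_apply]
  exact Finset.sum_congr rfl fun r _ => by rw [Matrix.conjTranspose_apply]

lemma gram_pow {N k' : ℕ} (K : Matrix (Fin N) (Fin N) ℂ) (hK : K.IsHermitian)
    (E : Matrix (Fin N) (Fin k') ℂ) (i j : ℕ) :
    (K^i * E)ᴴ * (K^j * E) = Eᴴ * K^(i+j) * E := by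
  rw [Matrix.conjTranspose_mul, (hK.pow i).eq, pow_add, Matrix.mul_assoc, Matrix.mul_assoc,
    Matrix.mul_assoc]

end Spec8


/-- The spectral map on `𝒥_{k,N}` is injective: two matrices in
`𝒥_{k,N}` with the same moments `E_1^* J^i E_1` (equivalently, the same spectral
measure) are equal. -/
theorem spectral_map_injective
    (k n ℓ : ℕ) (hk : 1 ≤ k) (hn : 2 ≤ n) (hℓ : ℓ < k)
    (J Jhat : Matrix (Fin (n * k - ℓ)) (Fin (n * k - ℓ)) ℂ)
    (hJ : IsJkN k n ℓ J) (hJhat : IsJkN k n ℓ Jhat)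
    (hmom : ∀ i : ℕ,
        (Esel k (n * k - ℓ) 0)ᴴ * (J ^ i) * Esel k (n * k - ℓ) 0 =
        (Esel k (n * k - ℓ) 0)ᴴ * (Jhat ^ i) * Esel k (n * k - ℓ) 0) :
    J = Jhat := by
  obtain ⟨hH, hband, htri, hech⟩ := hJ
  obtain ⟨hH', hband', htri', hech'⟩ := hJhat
  have gramEq : ∀ i j : ℕ,
      (J^i * Esel k (n*k-ℓ) 0)ᴴ * (J^j * Esel k (n*k-ℓ) 0) =
      (Jhat^i * Esel k (n*k-ℓ) 0)ᴴ * (Jhat^j * Esel k (n*k-ℓ) 0) := by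
    intro i j
    rw [Spec8.gram_pow J hH _ i j, Spec8.gram_pow Jhat hH' _ i j, hmom (i+j)]
  have key : ∀ i, i ≤ n - 1 → J^i * Esel k (n*k-ℓ) 0 = Jhat^i * Esel k (n*k-ℓ) 0 := by
    intro i
    induction i using Nat.strong_induction_on with
    | _ i IH =>
      intro hi
      rcases Nat.eq_zero_or_pos i with rfl | hipos
      · rw [pow_zero, pow_zero]
      obtain ⟨i', rfl⟩ : ∃ i', i = i' + 1 := ⟨i - 1, by omega⟩
      have hD1 : ∀ (a : Fin k) (r : Fin (n*k-ℓ)), (r:ℕ) < (i'+1)*k →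
          (J^(i'+1) * Esel k (n*k-ℓ) 0) r a = (Jhat^(i'+1) * Esel k (n*k-ℓ) 0) r a := by
        intro a r hr
        have hx : ∀ j, j ≤ i' → ∀ a' : Fin k,
            ∑ r', star ((J^j * Esel k (n*k-ℓ) 0) r' a') *
              ((J^(i'+1) * Esel k (n*k-ℓ) 0) r' a - (Jhat^(i'+1) * Esel k (n*k-ℓ) 0) r' a) = 0 := by
          intro j hj a'
          have e1 := gramEq j (i'+1)
          rw [← IH j (by omega) (by omega)] at e1
          have e2 := congrFun (congrFun e1 a') a
          rw [Spec8.gram_entry, Spec8.gram_entry] at e2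
          have e3 : ∑ r', (star ((J^j * Esel k (n*k-ℓ) 0) r' a') *
                (J^(i'+1) * Esel k (n*k-ℓ) 0) r' a -
              star ((J^j * Esel k (n*k-ℓ) 0) r' a') *
                (Jhat^(i'+1) * Esel k (n*k-ℓ) 0) r' a) = 0 := by
            rw [Finset.sum_sub_distrib, e2, sub_self]
          rw [← e3]
          exact Finset.sum_congr rfl fun r' _ => mul_sub _ _ _
        have hsp := Spec8.span_lemma hk hℓ J hband htri i' (by omega)
          (fun r' => (J^(i'+1) * Esel k (n*k-ℓ) 0) r' a -
            (Jhat^(i'+1) * Esel k (n*k-ℓ) 0) r' a) hx r hr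
        exact sub_eq_zero.mp hsp
      by_cases hcase : i' + 3 ≤ n
      · -- middle block case
        have hb1 : ∀ d : ℕ, d < k → (i'+1)*k + d < n*k - ℓ := by
          intro d hd
          have h2 : (i'+3)*k ≤ n*k := Nat.mul_le_mul_right k hcase
          have h3 : (i'+1)*k + k + k = (i'+3)*k := by ring
          omega
        have hbound : (i'+1)*k + k ≤ n*k - ℓ := by
          have h2 : (i'+3)*k ≤ n*k := Nat.mul_le_mul_right k hcase
          have h3 : (i'+1)*k + k + k = (i'+3)*k := by ring
          omega
        have hi2 : (i'+1)*k + k = (i'+1+1)*k := by ring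
        have hQg : ∀ a b : Fin k,
            ∑ d : Fin k, star (((Esel k (n*k-ℓ) (i'+1))ᴴ * (J^(i'+1) * Esel k (n*k-ℓ) 0)) d a) *
              ((Esel k (n*k-ℓ) (i'+1))ᴴ * (J^(i'+1) * Esel k (n*k-ℓ) 0)) d b =
            ∑ d : Fin k, star (((Esel k (n*k-ℓ) (i'+1))ᴴ * (Jhat^(i'+1) * Esel k (n*k-ℓ) 0)) d a) *
              ((Esel k (n*k-ℓ) (i'+1))ᴴ * (Jhat^(i'+1) * Esel k (n*k-ℓ) 0)) d b := by
          intro a b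
          have e1 := congrFun (congrFun (gramEq (i'+1) (i'+1)) a) b
          rw [Spec8.gram_entry, Spec8.gram_entry] at e1
          have e2 : ∑ r, (star ((J^(i'+1) * Esel k (n*k-ℓ) 0) r a) *
                (J^(i'+1) * Esel k (n*k-ℓ) 0) r b -
              star ((Jhat^(i'+1) * Esel k (n*k-ℓ) 0) r a) *
                (Jhat^(i'+1) * Esel k (n*k-ℓ) 0) r b) = 0 := by
            rw [Finset.sum_sub_distrib, e1, sub_self]
          have hv : ∀ r : Fin (n*k-ℓ), ((r:ℕ) < (i'+1)*k ∨ (i'+1)*k + k ≤ (r:ℕ)) →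
              (star ((J^(i'+1) * Esel k (n*k-ℓ) 0) r a) *
                (J^(i'+1) * Esel k (n*k-ℓ) 0) r b -
              star ((Jhat^(i'+1) * Esel k (n*k-ℓ) 0) r a) *
                (Jhat^(i'+1) * Esel k (n*k-ℓ) 0) r b) = 0 := by
            intro r hc
            rcases hc with h | h
            · rw [hD1 a r h, hD1 b r h, sub_self]
            · rw [Spec8.pow_supp hk J hband (i'+1) r a (by omega),
                Spec8.pow_supp hk Jhat hband' (i'+1) r a (by omega)]
              simp
          rw [Spec8.sum_block _ ((i'+1)*k) k hbound hv] at e2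
          have e3 : ∑ d : Fin k,
              (star (((Esel k (n*k-ℓ) (i'+1))ᴴ * (J^(i'+1) * Esel k (n*k-ℓ) 0)) d a) *
                ((Esel k (n*k-ℓ) (i'+1))ᴴ * (J^(i'+1) * Esel k (n*k-ℓ) 0)) d b -
              star (((Esel k (n*k-ℓ) (i'+1))ᴴ * (Jhat^(i'+1) * Esel k (n*k-ℓ) 0)) d a) *
                ((Esel k (n*k-ℓ) (i'+1))ᴴ * (Jhat^(i'+1) * Esel k (n*k-ℓ) 0)) d b) = 0 := by
            rw [← e2]
            refine Finset.sum_congr rfl fun d _ => ?_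
            rw [Spec8.EselT_mul_apply (i'+1) _ d a (hb1 d d.isLt),
              Spec8.EselT_mul_apply (i'+1) _ d b (hb1 d d.isLt),
              Spec8.EselT_mul_apply (i'+1) _ d a (hb1 d d.isLt),
              Spec8.EselT_mul_apply (i'+1) _ d b (hb1 d d.isLt)]
          rw [Finset.sum_sub_distrib] at e3
          exact sub_eq_zero.mp e3
        have hQ : RowEchelonPosPivots ((Esel k (n*k-ℓ) (i'+1))ᴴ * (J^(i'+1) * Esel k (n*k-ℓ) 0)) := by
          rw [Spec8.block_rec_mid hk hℓ J hband i' hcase]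
          exact Spec8.echelon_mul_utpd _ _ (Spec8.utpd_echelon _ (htri i' hcase))
            (Spec8.Ptri hk hℓ J hband htri i' (by omega))
        have hQh : RowEchelonPosPivots ((Esel k (n*k-ℓ) (i'+1))ᴴ * (Jhat^(i'+1) * Esel k (n*k-ℓ) 0)) := by
          rw [Spec8.block_rec_mid hk hℓ Jhat hband' i' hcase]
          exact Spec8.echelon_mul_utpd _ _ (Spec8.utpd_echelon _ (htri' i' hcase))
            (Spec8.Ptri hk hℓ Jhat hband' htri' i' (by omega))
        have hQQ : (Esel k (n*k-ℓ) (i'+1))ᴴ * (J^(i'+1) * Esel k (n*k-ℓ) 0) =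
            (Esel k (n*k-ℓ) (i'+1))ᴴ * (Jhat^(i'+1) * Esel k (n*k-ℓ) 0) :=
          Spec8.echelon_gram_uniq _ _ hQ hQh hQg
        ext r a
        rcases lt_or_ge (r:ℕ) ((i'+1)*k) with h | h
        · exact hD1 a r h
        rcases lt_or_ge (r:ℕ) ((i'+1)*k + k) with h2 | h2
        · have hd : (r:ℕ) - (i'+1)*k < k := by omega
          have hfin : r = ⟨(i'+1)*k + ((r:ℕ) - (i'+1)*k), hb1 _ hd⟩ := by
            apply Fin.ext
            show (r:ℕ) = (i'+1)*k + ((r:ℕ) - (i'+1)*k)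
            omega
          have hent := congrFun (congrFun hQQ ⟨(r:ℕ) - (i'+1)*k, hd⟩) a
          rw [Spec8.EselT_mul_apply (i'+1) _ _ a (hb1 _ hd),
            Spec8.EselT_mul_apply (i'+1) _ _ a (hb1 _ hd)] at hent
          rw [hfin]
          exact hent
        · rw [Spec8.pow_supp hk J hband (i'+1) r a (by omega),
            Spec8.pow_supp hk Jhat hband' (i'+1) r a (by omega)]
      · -- last block case
        have hieq : i' + 1 = n - 1 := by omega
        rw [hieq] at hD1 ⊢
        have hp1 : (n-1)*k + k = n*k := by
          have h2 : (n-1) + 1 = n := by omega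
          calc (n-1)*k + k = ((n-1)+1)*k := by ring
            _ = n*k := by rw [h2]
        have hb1 : ∀ d : ℕ, d < k - ℓ → (n-1)*k + d < n*k - ℓ := by intro d hd; omega
        have hQg : ∀ a b : Fin k,
            ∑ d : Fin (k-ℓ), star (((EselLast k n ℓ)ᴴ * (J^(n-1) * Esel k (n*k-ℓ) 0)) d a) *
              ((EselLast k n ℓ)ᴴ * (J^(n-1) * Esel k (n*k-ℓ) 0)) d b =
            ∑ d : Fin (k-ℓ), star (((EselLast k n ℓ)ᴴ * (Jhat^(n-1) * Esel k (n*k-ℓ) 0)) d a) *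
              ((EselLast k n ℓ)ᴴ * (Jhat^(n-1) * Esel k (n*k-ℓ) 0)) d b := by
          intro a b
          have e1 := congrFun (congrFun (gramEq (n-1) (n-1)) a) b
          rw [Spec8.gram_entry, Spec8.gram_entry] at e1
          have e2 : ∑ r, (star ((J^(n-1) * Esel k (n*k-ℓ) 0) r a) *
                (J^(n-1) * Esel k (n*k-ℓ) 0) r b -
              star ((Jhat^(n-1) * Esel k (n*k-ℓ) 0) r a) *
                (Jhat^(n-1) * Esel k (n*k-ℓ) 0) r b) = 0 := by
            rw [Finset.sum_sub_distrib, e1, sub_self]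
          have hbound : (n-1)*k + (k-ℓ) ≤ n*k - ℓ := by omega
          have hv : ∀ r : Fin (n*k-ℓ), ((r:ℕ) < (n-1)*k ∨ (n-1)*k + (k-ℓ) ≤ (r:ℕ)) →
              (star ((J^(n-1) * Esel k (n*k-ℓ) 0) r a) *
                (J^(n-1) * Esel k (n*k-ℓ) 0) r b -
              star ((Jhat^(n-1) * Esel k (n*k-ℓ) 0) r a) *
                (Jhat^(n-1) * Esel k (n*k-ℓ) 0) r b) = 0 := by
            intro r hc
            rcases hc with h | h
            · rw [hD1 a r h, hD1 b r h, sub_self]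
            · exact absurd r.isLt (by omega)
          rw [Spec8.sum_block _ ((n-1)*k) (k-ℓ) hbound hv] at e2
          have e3 : ∑ d : Fin (k-ℓ),
              (star (((EselLast k n ℓ)ᴴ * (J^(n-1) * Esel k (n*k-ℓ) 0)) d a) *
                ((EselLast k n ℓ)ᴴ * (J^(n-1) * Esel k (n*k-ℓ) 0)) d b -
              star (((EselLast k n ℓ)ᴴ * (Jhat^(n-1) * Esel k (n*k-ℓ) 0)) d a) *
                ((EselLast k n ℓ)ᴴ * (Jhat^(n-1) * Esel k (n*k-ℓ) 0)) d b) = 0 := by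
            rw [← e2]
            refine Finset.sum_congr rfl fun d _ => ?_
            rw [Spec8.EselLastT_mul_apply _ d a (hb1 d d.isLt),
              Spec8.EselLastT_mul_apply _ d b (hb1 d d.isLt),
              Spec8.EselLastT_mul_apply _ d a (hb1 d d.isLt),
              Spec8.EselLastT_mul_apply _ d b (hb1 d d.isLt)]
          rw [Finset.sum_sub_distrib] at e3
          exact sub_eq_zero.mp e3
        have hQ : RowEchelonPosPivots ((EselLast k n ℓ)ᴴ * (J^(n-1) * Esel k (n*k-ℓ) 0)) := by
          rw [Spec8.block_rec_last hk hℓ hn J hband]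
          exact Spec8.echelon_mul_utpd _ _ hech
            (Spec8.Ptri hk hℓ J hband htri (n-2) (by omega))
        have hQh : RowEchelonPosPivots ((EselLast k n ℓ)ᴴ * (Jhat^(n-1) * Esel k (n*k-ℓ) 0)) := by
          rw [Spec8.block_rec_last hk hℓ hn Jhat hband']
          exact Spec8.echelon_mul_utpd _ _ hech'
            (Spec8.Ptri hk hℓ Jhat hband' htri' (n-2) (by omega))
        have hQQ : (EselLast k n ℓ)ᴴ * (J^(n-1) * Esel k (n*k-ℓ) 0) =
            (EselLast k n ℓ)ᴴ * (Jhat^(n-1) * Esel k (n*k-ℓ) 0) :=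
          Spec8.echelon_gram_uniq _ _ hQ hQh hQg
        ext r a
        rcases lt_or_ge (r:ℕ) ((n-1)*k) with h | h
        · exact hD1 a r h
        · have hd : (r:ℕ) - (n-1)*k < k - ℓ := by
            have := r.isLt
            omega
          have hfin : r = ⟨(n-1)*k + ((r:ℕ) - (n-1)*k), hb1 _ hd⟩ := by
            apply Fin.ext
            show (r:ℕ) = (n-1)*k + ((r:ℕ) - (n-1)*k)
            omega
          have hent := congrFun (congrFun hQQ ⟨(r:ℕ) - (n-1)*k, hd⟩) a
          rw [Spec8.EselLastT_mul_apply _ _ a (hb1 _ hd),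
            Spec8.EselLastT_mul_apply _ _ a (hb1 _ hd)] at hent
          rw [hfin]
          exact hent
  have keyn : J^n * Esel k (n*k-ℓ) 0 = Jhat^n * Esel k (n*k-ℓ) 0 := by
    ext r a
    refine sub_eq_zero.mp ?_
    refine Spec8.span_full hk hℓ hn J hband htri hech
      (fun r' => (J^n * Esel k (n*k-ℓ) 0) r' a - (Jhat^n * Esel k (n*k-ℓ) 0) r' a) ?_ r
    intro j hj a'
    have e1 := gramEq j n
    rw [← key j hj] at e1
    have e2 := congrFun (congrFun e1 a') a
    rw [Spec8.gram_entry, Spec8.gram_entry] at e2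
    have e3 : ∑ r', (star ((J^j * Esel k (n*k-ℓ) 0) r' a') *
          (J^n * Esel k (n*k-ℓ) 0) r' a -
        star ((J^j * Esel k (n*k-ℓ) 0) r' a') *
          (Jhat^n * Esel k (n*k-ℓ) 0) r' a) = 0 := by
      rw [Finset.sum_sub_distrib, e2, sub_self]
    rw [← e3]
    exact Finset.sum_congr rfl fun r' _ => mul_sub _ _ _
  have hMW : ∀ j, j ≤ n-1 →
      (J^j * Esel k (n*k-ℓ) 0)ᴴ * (J - Jhat) = 0 := by
    intro j hj
    have e1 : J * (J^j * Esel k (n*k-ℓ) 0) = J^(j+1) * Esel k (n*k-ℓ) 0 := by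
      rw [← Matrix.mul_assoc, ← pow_succ']
    have e2 : Jhat * (J^j * Esel k (n*k-ℓ) 0) = Jhat^(j+1) * Esel k (n*k-ℓ) 0 := by
      rw [key j hj, ← Matrix.mul_assoc, ← pow_succ']
    have e3 : J^(j+1) * Esel k (n*k-ℓ) 0 = Jhat^(j+1) * Esel k (n*k-ℓ) 0 := by
      by_cases hj1 : j + 1 ≤ n - 1
      · exact key (j+1) hj1
      · rw [show j + 1 = n by omega]
        exact keyn
    have h1 : (J - Jhat) * (J^j * Esel k (n*k-ℓ) 0) = 0 := by
      rw [Matrix.sub_mul, e1, e2, e3, sub_self]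
    have hherm : (J - Jhat)ᴴ = J - Jhat := (hH.sub hH').eq
    calc (J^j * Esel k (n*k-ℓ) 0)ᴴ * (J - Jhat)
        = ((J - Jhat)ᴴ * (J^j * Esel k (n*k-ℓ) 0))ᴴ := by
          conv_rhs => rw [Matrix.conjTranspose_mul, Matrix.conjTranspose_conjTranspose]
      _ = ((J - Jhat) * (J^j * Esel k (n*k-ℓ) 0))ᴴ := by rw [hherm]
      _ = 0 := by rw [h1, Matrix.conjTranspose_zero]
  ext r c
  have hfin : (J - Jhat) r c = 0 := by
    refine Spec8.span_full hk hℓ hn J hband htri hech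
      (fun r' => (J - Jhat) r' c) ?_ r
    intro j hj a
    have h2 := congrFun (congrFun (hMW j hj) a) c
    rw [Spec8.gram_entry] at h2
    simpa using h2
  have := Matrix.sub_apply J Jhat r c ▸ hfin
  rw [Matrix.sub_apply] at hfin
  exact sub_eq_zero.mp hfin
end
end
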